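/- arXiv:2410.04557 — 4 statements merged into one kernel-verified Lean document; each statement's English description precedes it below -/
import Mathlib

section
/- There exists a constant C > 0 such that for every function θ ∈ L²(ℝ) with weak derivative θ' ∈ L²(ℝ) and θ(0) = 0, one has (∫_ℝ |θ(t)|²/|t| dt)^{1/2} ≤ C ‖θ‖_{L²}^{1/2} ‖θ'‖_{L²}^{1/2}. -/
open MeasureTheory Real

/-!
Since `θ(t) = ∫₀ᵗ θ'`, Cauchy–Schwarz gives `|θ(t)|² ≤ |t| ‖θ'‖₂²`. Hence on `[-R, R]` the
integrand `|θ(t)|²/|t|` is at most `‖θ'‖₂²`, while outside it is at most `|θ(t)|²/R`, so the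
weighted integral is at most `2R ‖θ'‖₂² + ‖θ‖₂²/R`. The choice `R = ‖θ‖₂ / ‖θ'‖₂` gives
`3 ‖θ‖₂ ‖θ'‖₂`.
-/

theorem sq_norm_intervalIntegral_le_abs_mul_integral_sq_norm {E : Type*} [NormedAddCommGroup E]
    [NormedSpace ℝ E] {f : ℝ → E} (hf : MemLp f 2 volume) (a b : ℝ) :
    ‖∫ s in a..b, f s‖ ^ 2 ≤ |b - a| * ∫ t, ‖f t‖ ^ 2 := by
  have hvol : volume (Set.uIoc a b) = ENNReal.ofReal |b - a| := volume_uIoc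
  have : IsFiniteMeasure (volume.restrict (Set.uIoc a b)) := ⟨by simp [hvol]⟩
  have holder := integral_mul_norm_le_Lp_mul_Lq (μ := volume.restrict (Set.uIoc a b))
    (f := fun s => ‖f s‖) (g := fun _ => (1 : ℝ)) HolderConjugate.two_two
    (by simpa using hf.norm.restrict (Set.uIoc a b)) (by simpa using memLp_const 1)
  simp only [norm_norm, norm_one, one_pow, mul_one, integral_const, smul_eq_mul, rpow_two,
    ← sqrt_eq_rpow, measureReal_def, Measure.restrict_apply_univ, hvol,
    ENNReal.toReal_ofReal (abs_nonneg _)] at holder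
  have h1 : ‖∫ s in a..b, f s‖ ≤ √(∫ s in Set.uIoc a b, ‖f s‖ ^ 2) * √|b - a| :=
    intervalIntegral.norm_integral_le_integral_norm_uIoc.trans holder
  have h2 : ∫ s in Set.uIoc a b, ‖f s‖ ^ 2 ≤ ∫ t, ‖f t‖ ^ 2 :=
    setIntegral_le_integral (hf.integrable_norm_pow two_ne_zero) (.of_forall fun _ => by positivity)
  calc ‖∫ s in a..b, f s‖ ^ 2 ≤ (√(∫ s in Set.uIoc a b, ‖f s‖ ^ 2) * √|b - a|) ^ 2 := by gcongr
    _ = (∫ s in Set.uIoc a b, ‖f s‖ ^ 2) * |b - a| := by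
        rw [mul_pow, sq_sqrt (integral_nonneg fun _ => by positivity), sq_sqrt (abs_nonneg _)]
    _ ≤ |b - a| * ∫ t, ‖f t‖ ^ 2 := by rw [mul_comm]; gcongr

theorem integral_div_abs_le_of_le_abs_mul {u : ℝ → ℝ} (hu0 : 0 ≤ u)
    (hu : Integrable u) {B : ℝ} (huB : ∀ t, u t ≤ |t| * B) {R : ℝ} (hR : 0 < R) :
    ∫ t, u t / |t| ≤ 2 * R * B + (∫ t, u t) / R := by
  have hB : 0 ≤ B := by simpa using (hu0 1).trans (huB 1)
  have hind : Integrable ((Set.Icc (-R) R).indicator fun _ => B) :=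
    (integrableOn_const measure_Icc_lt_top.ne).integrable_indicator measurableSet_Icc
  have hdom : ∀ t, u t / |t| ≤ (Set.Icc (-R) R).indicator (fun _ => B) t + u t / R := by
    intro t
    rcases le_or_gt |t| R with ht | ht
    · rw [Set.indicator_of_mem (show t ∈ Set.Icc (-R) R from abs_le.mp ht)]
      have hnear : u t / |t| ≤ B := div_le_of_le_mul₀ (abs_nonneg t) hB (by linarith [huB t])
      linarith [div_nonneg (hu0 t) hR.le]
    · have hout : t ∉ Set.Icc (-R) R := fun h => ht.not_ge (abs_le.mpr h)
      rw [Set.indicator_of_notMem hout]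
      simpa using div_le_div_of_nonneg_left (hu0 t) hR ht.le
  calc ∫ t, u t / |t| ≤ ∫ t, ((Set.Icc (-R) R).indicator (fun _ => B) t + u t / R) :=
        integral_mono_of_nonneg (.of_forall fun t => div_nonneg (hu0 t) (abs_nonneg t))
          (hind.add (hu.div_const R)) (.of_forall hdom)
    _ = 2 * R * B + (∫ t, u t) / R := by
        rw [integral_add hind (hu.div_const R), integral_indicator measurableSet_Icc,
          setIntegral_const, smul_eq_mul, Real.volume_real_Icc_of_le (by linarith), integral_div]
        ring

theorem integral_div_abs_le_three_mul_sqrt {u : ℝ → ℝ} (hu0 : 0 ≤ u)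
    (hu : Integrable u) {B : ℝ} (huB : ∀ t, u t ≤ |t| * B) :
    ∫ t, u t / |t| ≤ 3 * √(∫ t, u t) * √B := by
  rcases (integral_nonneg hu0 : 0 ≤ ∫ t, u t).eq_or_lt with hA | hA
  · have hzero : u =ᵐ[volume] 0 := (integral_eq_zero_iff_of_nonneg hu0 hu).mp hA.symm
    rw [← hA, integral_eq_zero_of_ae (by filter_upwards [hzero] with t ht; simp [ht])]
    simp
  have hB : 0 < B := by
    by_contra! hB
    have hzero : u = 0 := funext fun t =>
      le_antisymm ((huB t).trans (mul_nonpos_of_nonneg_of_nonpos (abs_nonneg t) hB)) (hu0 t)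
    simp [hzero] at hA
  have hsA := sqrt_pos.mpr hA
  have hsB := sqrt_pos.mpr hB
  calc ∫ t, u t / |t| ≤ 2 * (√(∫ t, u t) / √B) * B + (∫ t, u t) / (√(∫ t, u t) / √B) :=
        integral_div_abs_le_of_le_abs_mul hu0 hu huB (div_pos hsA hsB)
    _ = 3 * √(∫ t, u t) * √B := by
        nth_rewrite 2 [← mul_self_sqrt hB.le]
        nth_rewrite 2 [← mul_self_sqrt hA.le]
        field_simp
        ring

/-- There exists `C > 0` such that for every `θ ∈ L²(ℝ)` with weak derivative
`θ' ∈ L²(ℝ)` (encoded by `θ x = ∫ s in 0..x, θ' s`, which also gives `θ 0 = 0`),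
one has `‖θ‖_{L²(dt/|t|)} ≤ C ‖θ‖_{L²}^{1/2} ‖θ'‖_{L²}^{1/2}`. -/
theorem weighted_L2_interpolation_bound :
    ∃ C : ℝ, 0 < C ∧ ∀ (θ θ' : ℝ → ℂ),
      MemLp θ 2 volume → MemLp θ' 2 volume →
      (∀ x : ℝ, θ x = ∫ s in (0:ℝ)..x, θ' s) → θ 0 = 0 →
      (∫ t : ℝ, ‖θ t‖ ^ 2 / |t|) ^ ((1:ℝ)/2) ≤
        C * (∫ t : ℝ, ‖θ t‖ ^ 2) ^ ((1:ℝ)/4) * (∫ t : ℝ, ‖θ' t‖ ^ 2) ^ ((1:ℝ)/4) := by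
  refine ⟨2, two_pos, fun θ θ' hθ hθ' hrep _ => ?_⟩
  set A := ∫ t : ℝ, ‖θ t‖ ^ 2
  set B := ∫ t : ℝ, ‖θ' t‖ ^ 2
  have hA : 0 ≤ A := integral_nonneg fun t => by positivity
  have hB : 0 ≤ B := integral_nonneg fun t => by positivity
  have hpointwise (t : ℝ) : ‖θ t‖ ^ 2 ≤ |t| * B := by
    simpa [hrep t] using sq_norm_intervalIntegral_le_abs_mul_integral_sq_norm hθ' 0 t
  have hweighted : ∫ t, ‖θ t‖ ^ 2 / |t| ≤ 3 * √A * √B :=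
    integral_div_abs_le_three_mul_sqrt (fun t => by positivity)
      (hθ.integrable_norm_pow two_ne_zero) hpointwise
  calc (∫ t, ‖θ t‖ ^ 2 / |t|) ^ ((1:ℝ)/2) ≤ (3 * √A * √B) ^ ((1:ℝ)/2) :=
        rpow_le_rpow (integral_nonneg fun t => by positivity) hweighted (by norm_num)
    _ = √3 * A ^ ((1:ℝ)/4) * B ^ ((1:ℝ)/4) := by
        rw [sqrt_eq_rpow, sqrt_eq_rpow, sqrt_eq_rpow, mul_rpow (by positivity) (by positivity),
          mul_rpow (by positivity) (by positivity), ← rpow_mul hA, ← rpow_mul hB]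
        norm_num
    _ ≤ 2 * A ^ ((1:ℝ)/4) * B ^ ((1:ℝ)/4) := by
        gcongr
        rw [sqrt_le_left two_pos.le]
        norm_num
end

section
/- For the Bessel function J_{d/2} of the first kind and any t > 0 and integer d ≥ 2, one has 2^{d/2} Γ(d/2 + 1) |J_{d/2}(t)| / t^{d/2 - 1} ≤ ((2d+4)/π)^{1/2}. -/
open MeasureTheory Real

section Aux
open intervalIntegral Set

lemma contPow (p : ℝ) (hp : 0 ≤ p) : Continuous (fun s : ℝ => (1 - s^2) ^ p) :=
  (continuous_const.sub (continuous_pow 2)).rpow_const (fun _ => Or.inr hp)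

lemma measPow (q : ℝ) : Measurable (fun s : ℝ => (1 - s^2) ^ q) := by measurability

lemma integPow01 (q : ℝ) (hq : -1 < q) :
    IntervalIntegrable (fun s : ℝ => (1 - s^2) ^ q) volume 0 1 := by
  rcases le_or_gt 0 q with h | h
  · exact (contPow q h).intervalIntegrable 0 1
  · have hbase : IntervalIntegrable (fun x : ℝ => (1 - x) ^ q) volume 0 1 := by
      have := (intervalIntegrable_rpow' (a := 0) (b := 1) hq).comp_sub_left 1
      norm_num at this
      exact this.symm
    refine hbase.mono_fun' ((measPow q).aestronglyMeasurable) ?_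
    rw [Set.uIoc_of_le (by norm_num : (0:ℝ) ≤ 1)]
    filter_upwards [ae_restrict_mem measurableSet_Ioc] with s hs
    obtain ⟨hs0, hs1⟩ := hs
    have h1s : (0:ℝ) ≤ 1 - s := by linarith
    have h1s' : (0:ℝ) ≤ 1 + s := by linarith
    have heq : (1 - s^2 : ℝ) = (1 - s) * (1 + s) := by ring
    rw [Real.norm_eq_abs, abs_of_nonneg (Real.rpow_nonneg (by nlinarith) _), heq,
      Real.mul_rpow h1s h1s']
    have : (1 + s) ^ q ≤ 1 := Real.rpow_le_one_of_one_le_of_nonpos (by linarith) h.le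
    calc (1-s)^q * (1+s)^q ≤ (1-s)^q * 1 :=
          mul_le_mul_of_nonneg_left this (Real.rpow_nonneg h1s _)
      _ = (1-s)^q := mul_one _

lemma integPow (q : ℝ) (hq : -1 < q) :
    IntervalIntegrable (fun s : ℝ => (1 - s^2) ^ q) volume (-1) 1 := by
  have h1 := integPow01 q hq
  have h2 : IntervalIntegrable (fun s : ℝ => (1 - s^2) ^ q) volume (-1) 0 := by
    have := (IntervalIntegrable.iff_comp_neg).mp h1
    norm_num [neg_sq] at this
    exact this.symm
  exact h2.trans h1

lemma hasDerivAt_base (p : ℝ) (s : ℝ) (hs : s ∈ Set.Ioo (-1:ℝ) 1) :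
    HasDerivAt (fun s : ℝ => (1 - s^2) ^ p) ((0 - 2*s) * p * (1 - s^2) ^ (p-1)) s := by
  have hne : (1 : ℝ) - s^2 ≠ 0 := by nlinarith [hs.1, hs.2]
  have hinner : HasDerivAt (fun s : ℝ => 1 - s^2) (0 - 2*s) s := by
    simpa using (hasDerivAt_pow 2 s).const_sub (1:ℝ)
  exact hinner.rpow_const (Or.inl hne)

lemma keyBound (p t : ℝ) (hp : 1/2 ≤ p) (ht : 0 < t) :
    t * |∫ s in (-1:ℝ)..1, Real.cos (t*s) * (1 - s^2) ^ p| ≤ 2 := by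
  have hp0 : (0:ℝ) < p := lt_of_lt_of_le one_half_pos hp
  set A : ℝ → ℝ := fun s => Real.cos (t*s) * t * (1 - s^2) ^ p with hA_def
  set B : ℝ → ℝ := fun s => Real.sin (t*s) * ((0 - 2*s) * p * (1 - s^2) ^ (p-1)) with hB_def
  set G : ℝ → ℝ := fun s => 2 * p * |s| * (1 - s^2) ^ (p-1) with hG_def
  have hq : (-1:ℝ) < p - 1 := by linarith
  have hGint0 : IntervalIntegrable (fun s : ℝ => 2 * p * (1 - s^2) ^ (p-1)) volume (-1) 1 :=
    (integPow (p-1) hq).const_mul (2*p)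
  have hBbound : ∀ s : ℝ, |s| ≤ 1 → ‖B s‖ ≤ G s ∧ G s ≤ 2 * p * (1 - s^2) ^ (p-1) := by
    intro s h2
    have h4 : (0:ℝ) ≤ 1 - s^2 := by
      have := abs_le.mp h2; nlinarith [this.1, this.2]
    have h1 : |Real.sin (t*s)| ≤ 1 := Real.abs_sin_le_one _
    have h3 : (0:ℝ) ≤ (1 - s^2) ^ (p-1) := Real.rpow_nonneg h4 _
    constructor
    · show |Real.sin (t*s) * ((0 - 2*s) * p * (1 - s^2) ^ (p-1))| ≤ 2 * p * |s| * (1 - s^2) ^ (p-1)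
      rw [abs_mul, abs_mul, abs_mul, abs_of_nonneg hp0.le, abs_of_nonneg h3]
      calc |Real.sin (t*s)| * (|0 - 2*s| * p * (1 - s^2) ^ (p-1))
          ≤ 1 * (|0 - 2*s| * p * (1 - s^2) ^ (p-1)) := by
            apply mul_le_mul_of_nonneg_right h1; positivity
        _ = 2 * p * |s| * (1 - s^2) ^ (p-1) := by
            rw [show |0 - 2*s| = 2 * |s| by rw [zero_sub, abs_neg, abs_mul]; norm_num]
            ring
    · show 2 * p * |s| * (1 - s^2) ^ (p-1) ≤ 2 * p * (1 - s^2) ^ (p-1)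
      have h5 : 2 * p * |s| ≤ 2 * p * 1 :=
        mul_le_mul_of_nonneg_left h2 (by positivity)
      rw [mul_one] at h5
      exact mul_le_mul_of_nonneg_right h5 h3
  have habsI : ∀ s ∈ Set.uIoc (-1:ℝ) 1, |s| ≤ 1 := by
    intro s hs
    rw [Set.uIoc_of_le (by norm_num : (-1:ℝ) ≤ 1)] at hs
    rw [abs_le]; exact ⟨hs.1.le, hs.2⟩
  have hAint : IntervalIntegrable A volume (-1) 1 :=
    (((Real.continuous_cos.comp (continuous_const.mul continuous_id)).mul
      continuous_const).mul (contPow p hp0.le)).intervalIntegrable _ _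
  have hBmeas : AEStronglyMeasurable B (volume.restrict (Set.uIoc (-1:ℝ) 1)) :=
    ((Real.measurable_sin.comp (measurable_const.mul measurable_id)).mul
        (((measurable_const.sub (measurable_const.mul measurable_id)).mul measurable_const).mul
          (measPow (p-1)))).aestronglyMeasurable
  have hGmeas : AEStronglyMeasurable G (volume.restrict (Set.uIoc (-1:ℝ) 1)) :=
    ((measurable_const.mul measurable_abs).mul (measPow (p-1))).aestronglyMeasurable
  have hGint : IntervalIntegrable G volume (-1) 1 := by
    refine hGint0.mono_fun' hGmeas ?_
    filter_upwards [ae_restrict_mem measurableSet_uIoc] with s hs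
    have h2 := habsI s hs
    have h4 : (0:ℝ) ≤ 1 - s^2 := by
      have := abs_le.mp h2; nlinarith [this.1, this.2]
    have h3 : (0:ℝ) ≤ (1 - s^2) ^ (p-1) := Real.rpow_nonneg h4 _
    rw [Real.norm_eq_abs, abs_of_nonneg (by positivity : (0:ℝ) ≤ 2 * p * |s| * (1 - s^2) ^ (p-1))]
    exact (hBbound s h2).2
  have hBint : IntervalIntegrable B volume (-1) 1 := by
    refine hGint.mono_fun' hBmeas ?_
    filter_upwards [ae_restrict_mem measurableSet_uIoc] with s hs
    exact (hBbound s (habsI s hs)).1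
  -- FTC on [-1,1] for F s = sin(t s) (1-s²)^p
  have hFTC : (∫ s in (-1:ℝ)..1, (A s + B s)) = 0 := by
    have hcont : ContinuousOn (fun s : ℝ => Real.sin (t*s) * (1 - s^2) ^ p)
        (Set.Icc (-1:ℝ) 1) :=
      ((Real.continuous_sin.comp (continuous_const.mul continuous_id)).mul
        (contPow p hp0.le)).continuousOn
    have hderiv : ∀ s ∈ Set.Ioo (-1:ℝ) 1,
        HasDerivAt (fun s : ℝ => Real.sin (t*s) * (1 - s^2) ^ p) (A s + B s) s := by
      intro s hs
      have h1 : HasDerivAt (fun s : ℝ => Real.sin (t*s)) (Real.cos (t*s) * t) s := by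
        simpa using ((hasDerivAt_id s).const_mul t).sin
      have h2 := h1.mul (hasDerivAt_base p s hs)
      have : A s + B s = Real.cos (t*s) * t * (1 - s^2) ^ p
          + Real.sin (t*s) * ((0 - 2*s) * p * (1 - s^2) ^ (p-1)) := rfl
      rw [this]
      exact h2
    have heq := intervalIntegral.integral_eq_sub_of_hasDeriv_right_of_le
      (by norm_num : (-1:ℝ) ≤ 1) hcont
      (fun s hs => (hderiv s hs).hasDerivWithinAt) (hAint.add hBint)
    rw [heq]
    norm_num [Real.zero_rpow hp0.ne']
  have hsplit : (∫ s in (-1:ℝ)..1, A s) = - ∫ s in (-1:ℝ)..1, B s := by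
    have := intervalIntegral.integral_add hAint hBint
    rw [this] at hFTC; linarith
  have hAI : (∫ s in (-1:ℝ)..1, A s)
      = t * ∫ s in (-1:ℝ)..1, Real.cos (t*s) * (1 - s^2) ^ p := by
    rw [← intervalIntegral.integral_const_mul]
    congr 1; ext s; show Real.cos (t*s) * t * (1 - s^2) ^ p = _; ring
  have hG01int : IntervalIntegrable G volume 0 1 :=
    hGint.mono_set' (by rw [Set.uIoc_of_le (by norm_num : (0:ℝ) ≤ 1),
      Set.uIoc_of_le (by norm_num : (-1:ℝ) ≤ 1)]; exact Set.Ioc_subset_Ioc (by norm_num) le_rfl)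
  have hGm0int : IntervalIntegrable G volume (-1) 0 :=
    hGint.mono_set' (by rw [Set.uIoc_of_le (by norm_num : (-1:ℝ) ≤ 0),
      Set.uIoc_of_le (by norm_num : (-1:ℝ) ≤ 1)]; exact Set.Ioc_subset_Ioc le_rfl (by norm_num))
  have hG01 : (∫ s in (0:ℝ)..1, G s) = 1 := by
    have hcont : ContinuousOn (fun s : ℝ => -(1 - s^2) ^ p) (Set.Icc (0:ℝ) 1) :=
      (contPow p hp0.le).neg.continuousOn
    have hderiv : ∀ s ∈ Set.Ioo (0:ℝ) 1,
        HasDerivAt (fun s : ℝ => -(1 - s^2) ^ p) (G s) s := by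
      intro s hs
      have hd := (hasDerivAt_base p s ⟨by linarith [hs.1], hs.2⟩).neg
      have : G s = -((0 - 2*s) * p * (1 - s^2) ^ (p-1)) := by
        show 2 * p * |s| * (1 - s^2) ^ (p-1) = _
        rw [abs_of_pos hs.1]; ring
      rw [this]; exact hd
    have heq := intervalIntegral.integral_eq_sub_of_hasDeriv_right_of_le
      (by norm_num : (0:ℝ) ≤ 1) hcont (fun s hs => (hderiv s hs).hasDerivWithinAt) hG01int
    rw [heq]
    norm_num [Real.zero_rpow hp0.ne']
  have hGm0 : (∫ s in (-1:ℝ)..0, G s) = 1 := by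
    have hcont : ContinuousOn (fun s : ℝ => (1 - s^2) ^ p) (Set.Icc (-1:ℝ) 0) :=
      (contPow p hp0.le).continuousOn
    have hderiv : ∀ s ∈ Set.Ioo (-1:ℝ) 0,
        HasDerivAt (fun s : ℝ => (1 - s^2) ^ p) (G s) s := by
      intro s hs
      have hd := hasDerivAt_base p s ⟨hs.1, by linarith [hs.2]⟩
      have : G s = (0 - 2*s) * p * (1 - s^2) ^ (p-1) := by
        show 2 * p * |s| * (1 - s^2) ^ (p-1) = _
        rw [abs_of_neg hs.2]; ring
      rw [this]; exact hd
    have heq := intervalIntegral.integral_eq_sub_of_hasDeriv_right_of_le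
      (by norm_num : (-1:ℝ) ≤ 0) hcont (fun s hs => (hderiv s hs).hasDerivWithinAt) hGm0int
    rw [heq]
    norm_num [Real.zero_rpow hp0.ne']
  have hGtotal : (∫ s in (-1:ℝ)..1, G s) = 2 := by
    rw [← intervalIntegral.integral_add_adjacent_intervals hGm0int hG01int, hG01, hGm0]
    norm_num
  have hchain : |∫ s in (-1:ℝ)..1, B s| ≤ 2 := by
    calc |∫ s in (-1:ℝ)..1, B s| ≤ ∫ s in (-1:ℝ)..1, |B s| :=
          intervalIntegral.abs_integral_le_integral_abs (by norm_num)
      _ ≤ ∫ s in (-1:ℝ)..1, G s := by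
          apply intervalIntegral.integral_mono_ae_restrict (by norm_num) hBint.abs hGint
          filter_upwards [ae_restrict_mem measurableSet_Icc] with s hs
          have h2 : |s| ≤ 1 := abs_le.mpr ⟨hs.1, hs.2⟩
          simpa using (hBbound s h2).1
      _ = 2 := hGtotal
  calc t * |∫ s in (-1:ℝ)..1, Real.cos (t*s) * (1 - s^2) ^ p|
      = |t * ∫ s in (-1:ℝ)..1, Real.cos (t*s) * (1 - s^2) ^ p| := by
        rw [abs_mul, abs_of_pos ht]
    _ = |∫ s in (-1:ℝ)..1, B s| := by rw [← hAI, hsplit, abs_neg]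
    _ ≤ 2 := hchain

lemma gautschi (x : ℝ) (hx : 0 < x) :
    Real.Gamma (x + 1) ≤ Real.sqrt (x + 1) * Real.Gamma (x + 1/2) := by
  have h1 : (0:ℝ) < x + 1/2 := by linarith
  have h2 : (0:ℝ) < x + 3/2 := by linarith
  have hG1 : 0 < Real.Gamma (x + 1/2) := Real.Gamma_pos_of_pos h1
  have hG2 : 0 < Real.Gamma (x + 1) := Real.Gamma_pos_of_pos (by linarith)
  have hconv := convexOn_log_Gamma.2 (Set.mem_Ioi.mpr h1) (Set.mem_Ioi.mpr h2)
    (by norm_num : (0:ℝ) ≤ 1/2) (by norm_num : (0:ℝ) ≤ 1/2) (by norm_num)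
  rw [show (1/2:ℝ) • (x + 1/2) + (1/2:ℝ) • (x + 3/2) = x + 1 by simp; ring] at hconv
  simp only [Function.comp_apply, smul_eq_mul] at hconv
  have hrec : Real.Gamma (x + 3/2) = (x + 1/2) * Real.Gamma (x + 1/2) := by
    have := Real.Gamma_add_one h1.ne'
    rw [show x + 1/2 + 1 = x + 3/2 by ring] at this
    exact this
  have hsq : Real.Gamma (x + 1) ^ 2 ≤ (x + 1/2) * Real.Gamma (x + 1/2) ^ 2 := by
    have h2' : 0 < Real.Gamma (x + 3/2) := Real.Gamma_pos_of_pos h2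
    have := Real.exp_le_exp.mpr hconv
    rw [Real.exp_log hG2] at this
    calc Real.Gamma (x+1) ^ 2 ≤ Real.exp (1/2 * Real.log (Real.Gamma (x+1/2))
          + 1/2 * Real.log (Real.Gamma (x+3/2))) ^ 2 :=
          pow_le_pow_left₀ hG2.le this 2
      _ = Real.Gamma (x+1/2) * Real.Gamma (x+3/2) := by
          rw [← Real.exp_nat_mul]
          rw [show ((2:ℕ):ℝ) * (1/2 * Real.log (Real.Gamma (x+1/2)) + 1/2 * Real.log (Real.Gamma (x+3/2)))
             = Real.log (Real.Gamma (x+1/2)) + Real.log (Real.Gamma (x+3/2)) by push_cast; ring]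
          rw [Real.exp_add, Real.exp_log hG1, Real.exp_log h2']
      _ = (x + 1/2) * Real.Gamma (x + 1/2) ^ 2 := by rw [hrec]; ring
  have step : Real.Gamma (x + 1) ≤ Real.sqrt (x + 1/2) * Real.Gamma (x + 1/2) := by
    rw [← Real.sqrt_sq hG2.le, ← Real.sqrt_sq hG1.le, ← Real.sqrt_mul h1.le]
    exact Real.sqrt_le_sqrt hsq
  refine step.trans (mul_le_mul_of_nonneg_right ?_ hG1.le)
  exact Real.sqrt_le_sqrt (by linarith)

end Aux

/-- The Bessel function of the first kind of order `ν > -1/2`, via the Poisson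
integral representation
`J_ν(x) = ((x/2)^ν / (√π Γ(ν + 1/2))) ∫_{-1}^{1} cos (x s) (1 - s²)^{ν - 1/2} ds`. -/
noncomputable def besselJ (ν x : ℝ) : ℝ :=
  (x / 2) ^ ν / (Real.sqrt π * Real.Gamma (ν + 1/2)) *
    ∫ s in (-1:ℝ)..1, Real.cos (x * s) * (1 - s ^ 2) ^ (ν - 1/2)

/-- For any `t > 0` and integer `d ≥ 2`,
`2^{d/2} Γ(d/2 + 1) |J_{d/2}(t)| / t^{d/2 - 1} ≤ √((2d + 4)/π)`. -/
theorem besselJ_halfdim_bound (d : ℕ) (hd : 2 ≤ d) (t : ℝ) (ht : 0 < t) :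
    (2:ℝ) ^ ((d:ℝ)/2) * Real.Gamma ((d:ℝ)/2 + 1) * |besselJ ((d:ℝ)/2) t| /
        t ^ ((d:ℝ)/2 - 1) ≤
      Real.sqrt ((2 * (d:ℝ) + 4) / π) := by
  have hd2 : (2:ℝ) ≤ (d:ℝ) := by exact_mod_cast hd
  set ν : ℝ := (d:ℝ)/2 with hν_def
  have hν : 1 ≤ ν := by rw [hν_def]; linarith
  have hν0 : 0 < ν := by linarith
  have hp : 1/2 ≤ ν - 1/2 := by linarith
  have hπ : 0 < Real.sqrt π := Real.sqrt_pos.mpr Real.pi_pos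
  have hΓh : 0 < Real.Gamma (ν + 1/2) := Real.Gamma_pos_of_pos (by linarith)
  have hΓ1 : 0 < Real.Gamma (ν + 1) := Real.Gamma_pos_of_pos (by linarith)
  set I : ℝ := ∫ s in (-1:ℝ)..1, Real.cos (t*s) * (1 - s^2) ^ (ν - 1/2) with hI_def
  have hkey : t * |I| ≤ 2 := keyBound (ν - 1/2) t hp ht
  have hbJ : besselJ ν t = (t/2)^ν / (Real.sqrt π * Real.Gamma (ν + 1/2)) * I := rfl
  have ht2 : (0:ℝ) < (t/2)^ν := Real.rpow_pos_of_pos (half_pos ht) ν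
  have habs : |besselJ ν t| = (t/2)^ν / (Real.sqrt π * Real.Gamma (ν + 1/2)) * |I| := by
    rw [hbJ, abs_mul, abs_of_pos (div_pos ht2 (mul_pos hπ hΓh))]
  have hLHS : (2:ℝ)^ν * Real.Gamma (ν+1) * |besselJ ν t| / t^(ν-1)
      = Real.Gamma (ν+1) / (Real.sqrt π * Real.Gamma (ν + 1/2)) * (t * |I|) := by
    rw [habs, Real.div_rpow ht.le (by norm_num : (0:ℝ) ≤ 2), Real.rpow_sub ht]
    have h2ν : (0:ℝ) < (2:ℝ)^ν := Real.rpow_pos_of_pos two_pos ν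
    have htν : (0:ℝ) < t^ν := Real.rpow_pos_of_pos ht ν
    rw [Real.rpow_one]
    field_simp
  rw [hLHS]
  have hsqrt : Real.sqrt ((2 * (d:ℝ) + 4) / π) = 2 * Real.sqrt (ν+1) / Real.sqrt π := by
    rw [show (2 * (d:ℝ) + 4) = (2:ℝ)^2 * (ν+1) by rw [hν_def]; ring,
      Real.sqrt_div (by positivity), Real.sqrt_mul (by positivity), Real.sqrt_sq (by norm_num)]
  rw [hsqrt]
  have hg := gautschi ν hν0
  calc Real.Gamma (ν+1) / (Real.sqrt π * Real.Gamma (ν + 1/2)) * (t * |I|)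
      ≤ Real.Gamma (ν+1) / (Real.sqrt π * Real.Gamma (ν + 1/2)) * 2 :=
        mul_le_mul_of_nonneg_left hkey (by positivity)
    _ ≤ 2 * Real.sqrt (ν+1) / Real.sqrt π := by
        rw [div_mul_eq_mul_div, div_le_div_iff₀ (mul_pos hπ hΓh) hπ]
        nlinarith [mul_le_mul_of_nonneg_right hg (by positivity : (0:ℝ) ≤ 2 * Real.sqrt π), hπ.le, hΓh.le]
end

section
/- Let ψ ∈ L¹(ℝ) with ∫_ℝ ψ = 0, and define φ(s) = s^{-2} ψ(1/s). Then for almost every t ≠ 0, the Hilbert transform satisfies Hψ(1/t) = -t² · Hφ(t), where Hψ(x) = (1/π) p.v. ∫_ℝ ψ(y)/(x - y) dy. -/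
open MeasureTheory Real Filter Topology

/-- `HilbertAt ψ x v` means the Hilbert transform
`Hψ(x) = (1/π) p.v. ∫ ψ(y)/(x - y) dy` exists at `x` with value `v`. -/
def HilbertAt (ψ : ℝ → ℂ) (x : ℝ) (v : ℂ) : Prop :=
  Tendsto (fun ε : ℝ =>
      (1 / π : ℝ) • ∫ y in {y : ℝ | ε < |x - y|}, ψ y / ((x - y : ℝ) : ℂ))
    (nhdsWithin 0 (Set.Ioi 0)) (nhds v)

lemma integral_inv_image {S : Set ℝ} (hS : MeasurableSet S) (h0 : (0:ℝ) ∉ S) (g : ℝ → ℂ) :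
    ∫ y in (fun s : ℝ => s⁻¹) '' S, g y = ∫ s in S, |(-(s^2)⁻¹ : ℝ)| • g s⁻¹ :=
  integral_image_eq_integral_abs_deriv_smul hS
    (fun x hx => (hasDerivAt_inv (fun h => h0 (h ▸ hx))).hasDerivWithinAt)
    (inv_injective.injOn) g

lemma integrableOn_inv_image {S : Set ℝ} (hS : MeasurableSet S) (h0 : (0:ℝ) ∉ S) (g : ℝ → ℂ) :
    IntegrableOn g ((fun s : ℝ => s⁻¹) '' S) ↔
      IntegrableOn (fun s => |(-(s^2)⁻¹ : ℝ)| • g s⁻¹) S :=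
  integrableOn_image_iff_integrableOn_abs_deriv_smul hS
    (fun x hx => (hasDerivAt_inv (fun h => h0 (h ▸ hx))).hasDerivWithinAt)
    (inv_injective.injOn) g

lemma inv_image_compl_zero : (fun s : ℝ => s⁻¹) '' {(0:ℝ)}ᶜ = {(0:ℝ)}ᶜ := by
  ext y
  simp only [Set.mem_image, Set.mem_compl_iff, Set.mem_singleton_iff]
  constructor
  · rintro ⟨s, hs, rfl⟩; exact inv_ne_zero hs
  · intro hy; exact ⟨y⁻¹, inv_ne_zero hy, inv_inv y⟩

lemma compl_zero_ae_univ : ({(0:ℝ)}ᶜ : Set ℝ) =ᵐ[volume] (Set.univ : Set ℝ) := by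
  rw [MeasureTheory.ae_eq_univ, compl_compl]
  simp

lemma setIntegral_compl_zero (f : ℝ → ℂ) : ∫ x in {(0:ℝ)}ᶜ, f x = ∫ x, f x := by
  rw [setIntegral_congr_set compl_zero_ae_univ, setIntegral_univ]

lemma phi_aeeq (ψ φ : ℝ → ℂ) (hφ : ∀ s : ℝ, s ≠ 0 → φ s = ψ (1/s) / ((s:ℂ) ^ 2)) :
    φ =ᵐ[volume] fun s : ℝ => |(-(s^2)⁻¹ : ℝ)| • ψ s⁻¹ := by
  have h : ∀ s : ℝ, s ≠ 0 → φ s = |(-(s^2)⁻¹ : ℝ)| • ψ s⁻¹ := by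
    intro s hs
    rw [hφ s hs, abs_neg, abs_inv, abs_pow, sq_abs]
    rw [Complex.real_smul]
    push_cast
    rw [one_div]
    field_simp
  refine Filter.eventuallyEq_of_mem (s := {(0:ℝ)}ᶜ) (compl_mem_ae_iff.2 (by simp)) ?_
  intro s hs; exact h s hs

lemma phi_integrable (ψ φ : ℝ → ℂ) (hψ : Integrable ψ)
    (hφ : ∀ s : ℝ, s ≠ 0 → φ s = ψ (1/s) / ((s:ℂ) ^ 2)) : Integrable φ := by
  have h1 : IntegrableOn (fun s : ℝ => |(-(s^2)⁻¹ : ℝ)| • ψ s⁻¹) {(0:ℝ)}ᶜ := by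
    rw [← integrableOn_inv_image (measurableSet_singleton 0).compl (by simp) ψ,
      inv_image_compl_zero]
    exact hψ.integrableOn
  have h2 : Integrable (fun s : ℝ => |(-(s^2)⁻¹ : ℝ)| • ψ s⁻¹) := by
    rw [← integrableOn_univ]
    exact h1.congr_set_ae compl_zero_ae_univ.symm
  exact h2.congr (phi_aeeq ψ φ hφ).symm

lemma phi_integral_zero (ψ φ : ℝ → ℂ) (hψ : Integrable ψ) (hmean : (∫ x : ℝ, ψ x) = 0)
    (hφ : ∀ s : ℝ, s ≠ 0 → φ s = ψ (1/s) / ((s:ℂ) ^ 2)) : (∫ s : ℝ, φ s) = 0 := by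
  have := integral_inv_image (S := {(0:ℝ)}ᶜ) (measurableSet_singleton 0).compl (by simp) ψ
  rw [inv_image_compl_zero, setIntegral_compl_zero, hmean] at this
  rw [integral_congr_ae (phi_aeeq ψ φ hφ), ← setIntegral_compl_zero]
  exact this.symm

noncomputable def Bset (t ε : ℝ) : Set ℝ := {s : ℝ | ε < |1/t - 1/s|} \ {0}

lemma Bset_measurable (t ε : ℝ) : MeasurableSet (Bset t ε) := by
  have : MeasurableSet {s : ℝ | ε < |1/t - 1/s|} := by
    apply measurableSet_lt measurable_const
    apply Measurable.abs
    have : Measurable (fun s : ℝ => 1/s) := by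
      simpa [one_div] using (measurable_inv : Measurable (fun s : ℝ => s⁻¹))
    exact measurable_const.sub this
  exact this.diff (measurableSet_singleton 0)

lemma mem_Bset {t ε s : ℝ} (ht : t ≠ 0) :
    s ∈ Bset t ε ↔ s ≠ 0 ∧ ε * (|t| * |s|) < |s - t| := by
  unfold Bset
  simp only [Set.mem_diff, Set.mem_setOf_eq, Set.mem_singleton_iff]
  constructor
  · rintro ⟨h1, h2⟩
    refine ⟨h2, ?_⟩
    have he : (1/t - 1/s) = (s - t)/(t*s) := by field_simp
    rw [he, abs_div, abs_mul, lt_div_iff₀ (by positivity)] at h1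
    linarith [h1]
  · rintro ⟨h2, h1⟩
    refine ⟨?_, h2⟩
    have he : (1/t - 1/s) = (s - t)/(t*s) := by field_simp
    rw [he, abs_div, abs_mul, lt_div_iff₀ (by positivity)]
    linarith [h1]

lemma Bset_far {t ε s : ℝ} (ht : t ≠ 0) (hε : 0 < ε) (hs : s ∈ Bset t ε) :
    ε * t^2 / (1 + ε * |t|) < |s - t| := by
  obtain ⟨hs0, h⟩ := (mem_Bset ht).1 hs
  have hT : 0 < |t| := abs_pos.2 ht
  have h1 : |t| - |s - t| ≤ |s| := by
    have := abs_sub_abs_le_abs_sub t s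
    rw [abs_sub_comm t s] at this
    linarith
  rw [div_lt_iff₀ (by positivity)]
  have ht2 : t^2 = |t| * |t| := by rw [← sq_abs]; ring
  rw [ht2]
  nlinarith [mul_le_mul_of_nonneg_left h1 (mul_nonneg hε.le hT.le), abs_nonneg (s - t)]

lemma mem_Bset_of_far {t ε s : ℝ} (ht : t ≠ 0) (hε : 0 < ε) (hεt : ε * |t| < 1)
    (hs0 : s ≠ 0) (h : ε * t^2 / (1 - ε * |t|) < |s - t|) : s ∈ Bset t ε := by
  rw [mem_Bset ht]
  refine ⟨hs0, ?_⟩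
  have hT : 0 < |t| := abs_pos.2 ht
  have h1 : |s| ≤ |t| + |s - t| := by
    have := abs_sub_abs_le_abs_sub s t
    linarith
  rw [div_lt_iff₀ (by linarith)] at h
  have ht2 : t^2 = |t| * |t| := by rw [← sq_abs]; ring
  rw [ht2] at h
  nlinarith [mul_le_mul_of_nonneg_left h1 (mul_nonneg hε.le hT.le), abs_nonneg (s - t)]

lemma integrableOn_kernel {φ : ℝ → ℂ} (hφi : Integrable φ) {t ε : ℝ} (ht : t ≠ 0) (hε : 0 < ε) :
    IntegrableOn (fun s => φ s / ((t - s : ℝ) : ℂ)) (Bset t ε) := by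
  set d : ℝ := ε * t^2 / (1 + ε * |t|) with hd
  have hd0 : 0 < d := by have := abs_pos.2 ht; positivity
  have hbd : IntegrableOn (fun s : ℝ => ‖φ s‖ * d⁻¹) (Bset t ε) :=
    (hφi.norm.mul_const d⁻¹).integrableOn
  have hms : AEStronglyMeasurable (fun s => φ s / ((t - s : ℝ) : ℂ)) (volume.restrict (Bset t ε)) := by
    simp_rw [div_eq_mul_inv]
    exact hφi.aestronglyMeasurable.restrict.mul
      (((Complex.measurable_ofReal.comp (measurable_const.sub measurable_id)).inv).aestronglyMeasurable.restrict)
  refine Integrable.mono' hbd hms ?_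
  rw [ae_restrict_iff' (Bset_measurable t ε)]
  filter_upwards with s hs
  have hfar := Bset_far ht hε hs
  rw [norm_div, Complex.norm_real, Real.norm_eq_abs, abs_sub_comm t s, ← div_eq_mul_inv]
  gcongr


lemma key_identity (ψ φ : ℝ → ℂ) (hφi : Integrable φ)
    (hφ : ∀ s : ℝ, s ≠ 0 → φ s = ψ (1/s) / ((s:ℂ) ^ 2)) {t : ℝ} (ht : t ≠ 0)
    {ε : ℝ} (hε : 0 < ε) :
    (∫ y in {y : ℝ | ε < |1/t - y|}, ψ y / ((1/t - y : ℝ) : ℂ))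
      = (t:ℂ) * (∫ s in Bset t ε, φ s)
        - (t:ℂ)^2 * ∫ s in Bset t ε, φ s / ((t - s : ℝ) : ℂ) := by
  have himg : (fun s : ℝ => s⁻¹) '' (Bset t ε) = {y : ℝ | ε < |1/t - y|} \ {0} := by
    ext y
    constructor
    · rintro ⟨s, hs, rfl⟩
      obtain ⟨h1, h2⟩ := hs
      have h2' : s ≠ 0 := h2
      exact ⟨by simpa [one_div] using h1, by simp [inv_ne_zero h2']⟩
    · rintro ⟨h1, h2⟩
      have h2' : y ≠ 0 := h2
      refine ⟨y⁻¹, ⟨?_, by simp [inv_ne_zero h2']⟩, inv_inv y⟩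
      simpa [one_div, inv_inv] using h1
  have step1 : (∫ y in {y : ℝ | ε < |1/t - y|}, ψ y / ((1/t - y : ℝ) : ℂ))
      = ∫ y in {y : ℝ | ε < |1/t - y|} \ {0}, ψ y / ((1/t - y : ℝ) : ℂ) :=
    (setIntegral_congr_set (diff_null_ae_eq_self (by simp))).symm
  rw [step1, ← himg,
    integral_inv_image (Bset_measurable t ε) (fun h => h.2 rfl) (fun y => ψ y / ((1/t - y : ℝ) : ℂ))]
  have hpt : ∀ s ∈ Bset t ε,
      |(-(s^2)⁻¹ : ℝ)| • (ψ s⁻¹ / ((1/t - s⁻¹ : ℝ) : ℂ))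
        = (t:ℂ) * φ s - (t:ℂ)^2 * (φ s / ((t - s : ℝ) : ℂ)) := by
    intro s hs
    obtain ⟨hs0, hlt⟩ := (mem_Bset ht).1 hs
    have hst : s ≠ t := by
      rintro rfl
      rw [sub_self, abs_zero] at hlt
      exact absurd hlt (not_lt.2 (by positivity))
    rw [hφ s hs0]
    have h1 : |(-(s^2)⁻¹ : ℝ)| = (s^2)⁻¹ := by
      rw [abs_neg, abs_inv, abs_pow, sq_abs]
    rw [h1, Complex.real_smul]
    have hsC : (s:ℂ) ≠ 0 := Complex.ofReal_ne_zero.2 hs0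
    have htC : (t:ℂ) ≠ 0 := Complex.ofReal_ne_zero.2 ht
    have hts : (t:ℂ) - s ≠ 0 := sub_ne_zero.2 (fun h => hst (by exact_mod_cast h.symm))
    have hstC : (s:ℂ) - t ≠ 0 := sub_ne_zero.2 (fun h => hst (by exact_mod_cast h))
    have hD : -((t:ℂ) * s^2) + s^3 ≠ 0 := by
      have he : -((t:ℂ) * s^2) + s^3 = s^2 * (s - t) := by ring
      rw [he]
      exact mul_ne_zero (pow_ne_zero 2 hsC) hstC
    push_cast
    rw [one_div]
    field_simp [hD]
    ring
  rw [setIntegral_congr_fun (Bset_measurable t ε) hpt]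
  rw [integral_sub ((hφi.const_mul _).integrableOn)
    (((integrableOn_kernel hφi ht hε).const_mul ((t:ℂ)^2)))]
  rw [integral_const_mul, integral_const_mul]

lemma ae_lebesgue (φ : ℝ → ℂ) (hφi : Integrable φ) :
    ∀ᵐ t : ℝ, Tendsto (fun r => ⨍ y in Metric.closedBall t r, ‖φ y - φ t‖) (𝓝[>] (0:ℝ)) (𝓝 0) := by
  filter_upwards [IsUnifLocDoublingMeasure.ae_tendsto_average_norm_sub (μ := volume)
    hφi.locallyIntegrable 1] with t ht
  exact ht (fun _ => t) (fun r => r) tendsto_id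
    (by filter_upwards [self_mem_nhdsWithin] with r hr
        exact Metric.mem_closedBall_self (by simpa using le_of_lt hr))

lemma tendsto_Bset_integral (φ : ℝ → ℂ) (hφi : Integrable φ) {t : ℝ} (ht : t ≠ 0) :
    Tendsto (fun ε => ∫ s in Bset t ε, φ s) (𝓝[>] (0:ℝ)) (𝓝 (∫ s, φ s)) := by
  have heq : ∀ ε : ℝ, (∫ s in Bset t ε, φ s) = ∫ s, (Bset t ε).indicator φ s := by
    intro ε; rw [integral_indicator (Bset_measurable t ε)]
  simp_rw [heq]
  apply tendsto_integral_filter_of_dominated_convergence (fun s => ‖φ s‖)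
  · filter_upwards with ε
    exact hφi.aestronglyMeasurable.indicator (Bset_measurable t ε)
  · filter_upwards with ε
    filter_upwards with s
    exact norm_indicator_le_norm_self φ s
  · exact hφi.norm
  · have h0 : ∀ᵐ s : ℝ, s ≠ 0 ∧ s ≠ t := by
      have : volume ({(0:ℝ)} ∪ {t}) = 0 := measure_union_null (by simp) (by simp)
      filter_upwards [compl_mem_ae_iff.2 this] with s hs
      exact ⟨fun h => hs (by simp [h]), fun h => hs (by simp [h])⟩
    filter_upwards [h0] with s hs
    obtain ⟨hs0, hst⟩ := hs
    have hc : 0 < |s - t| / (|t| * |s| + 1) := by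
      have : 0 < |s - t| := abs_pos.2 (sub_ne_zero.2 hst)
      positivity
    apply Tendsto.congr' _ tendsto_const_nhds
    filter_upwards [Ioo_mem_nhdsGT_of_mem ⟨le_refl (0:ℝ), hc⟩] with ε hε
    have hmem : s ∈ Bset t ε := by
      rw [mem_Bset ht]
      refine ⟨hs0, ?_⟩
      have h1 : ε * (|t| * |s| + 1) < |s - t| := by
        rw [← div_mul_cancel₀ (|s - t|) (by positivity : (|t| * |s| + 1) ≠ 0)]
        exact mul_lt_mul_of_pos_right hε.2 (by positivity)
      nlinarith [hε.1]
    exact (Set.indicator_of_mem hmem φ).symm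

lemma Cset_measurable (t r : ℝ) : MeasurableSet {y : ℝ | r < |t - y|} :=
  measurableSet_lt measurable_const ((measurable_const.sub measurable_id).abs)

lemma integrableOn_kernel_C {φ : ℝ → ℂ} (hφi : Integrable φ) (t : ℝ) {r : ℝ} (hr : 0 < r) :
    IntegrableOn (fun s => φ s / ((t - s : ℝ) : ℂ)) {y : ℝ | r < |t - y|} := by
  have hbd : IntegrableOn (fun s : ℝ => ‖φ s‖ * r⁻¹) {y : ℝ | r < |t - y|} :=
    (hφi.norm.mul_const r⁻¹).integrableOn
  have hms : AEStronglyMeasurable (fun s => φ s / ((t - s : ℝ) : ℂ))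
      (volume.restrict {y : ℝ | r < |t - y|}) := by
    simp_rw [div_eq_mul_inv]
    exact hφi.aestronglyMeasurable.restrict.mul
      (((Complex.measurable_ofReal.comp (measurable_const.sub measurable_id)).inv).aestronglyMeasurable.restrict)
  refine Integrable.mono' hbd hms ?_
  rw [ae_restrict_iff' (Cset_measurable t r)]
  filter_upwards with s hs
  rw [norm_div, Complex.norm_real, Real.norm_eq_abs, ← div_eq_mul_inv]
  gcongr

lemma mf_tendsto {t : ℝ} (ht : t ≠ 0) :
    Tendsto (fun ε : ℝ => ε * t^2 / (1 - ε * |t|)) (𝓝[>] (0:ℝ)) (𝓝[>] (0:ℝ)) := by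
  have hT : 0 < |t| := abs_pos.2 ht
  apply tendsto_nhdsWithin_of_tendsto_nhds_of_eventually_within
  · have hc : ContinuousAt (fun ε : ℝ => ε * t^2 / (1 - ε * |t|)) 0 := by
      apply ContinuousAt.div
      · fun_prop
      · fun_prop
      · simp
    simpa using hc.tendsto.mono_left nhdsWithin_le_nhds
  · filter_upwards [Ioo_mem_nhdsGT_of_mem ⟨le_refl (0:ℝ), (by positivity : (0:ℝ) < 1/(2*|t|))⟩]
      with ε hε
    have h1 : ε * |t| < 1/2 := by
      have := hε.2
      rw [lt_div_iff₀ (by positivity)] at this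
      nlinarith [hε.1]
    have h0 := hε.1
    exact Set.mem_Ioi.2 (div_pos (by positivity) (by linarith))

lemma sliver_bound (φ : ℝ → ℂ) (hφi : Integrable φ) {t : ℝ} (ht : t ≠ 0)
    (hleb : Tendsto (fun r => ⨍ y in Metric.closedBall t r, ‖φ y - φ t‖) (𝓝[>] (0:ℝ)) (𝓝 0)) :
    Tendsto (fun ε => (∫ s in Bset t ε, φ s / ((t - s : ℝ) : ℂ))
        - ∫ s in {y : ℝ | ε * t^2 / (1 - ε * |t|) < |t - y|}, φ s / ((t - s : ℝ) : ℂ))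
      (𝓝[>] (0:ℝ)) (𝓝 0) := by
  have hT : 0 < |t| := abs_pos.2 ht
  set mf : ℝ → ℝ := fun ε => ε * t^2 / (1 - ε * |t|) with hmf
  set df : ℝ → ℝ := fun ε => ε * t^2 / (1 + ε * |t|) with hdf
  set avg : ℝ → ℝ := fun r => ⨍ y in Metric.closedBall t r, ‖φ y - φ t‖ with havg
  have hm_tendsto : Tendsto mf (𝓝[>] (0:ℝ)) (𝓝[>] (0:ℝ)) := mf_tendsto ht
  apply squeeze_zero_norm' (a := fun ε => 6 * avg (mf ε) + 8 * ε * |t| * ‖φ t‖)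
  · -- eventual bound
    filter_upwards [Ioo_mem_nhdsGT_of_mem ⟨le_refl (0:ℝ), (by positivity : (0:ℝ) < 1/(2*|t|))⟩]
      with ε hε
    have hε0 : 0 < ε := hε.1
    have ha : ε * |t| < 1/2 := by
      have := hε.2
      rw [lt_div_iff₀ (by positivity)] at this
      nlinarith
    have ha0 : 0 < ε * |t| := by positivity
    set m := mf ε with hm
    set d := df ε with hd
    have hm0 : 0 < m := by
      apply div_pos
      · positivity
      · linarith
    have hd0 : 0 < d := by
      apply div_pos
      · positivity
      · linarith
    have hdm : d ≤ m := by
      apply div_le_div_of_nonneg_left (by positivity) (by linarith) (by linarith)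
    set C : Set ℝ := {y : ℝ | m < |t - y|} with hC
    set E : Set ℝ := Bset t ε \ C with hE
    have hEmeas : MeasurableSet E := (Bset_measurable t ε).diff (Cset_measurable t m)
    have hEsub : E ⊆ Metric.closedBall t m := by
      intro s hs
      have h2 : ¬ (m < |t - s|) := hs.2
      rw [Metric.mem_closedBall, Real.dist_eq, abs_sub_comm]
      linarith [not_lt.1 h2]
    have hEfar : ∀ s ∈ E, d < |s - t| := fun s hs => Bset_far ht hε0 hs.1
    have hEfin : volume E < ⊤ :=
      lt_of_le_of_lt (measure_mono hEsub) measure_closedBall_lt_top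
    -- decomposition
    have hIB : IntegrableOn (fun s => φ s / ((t - s : ℝ) : ℂ)) (Bset t ε) :=
      integrableOn_kernel hφi ht hε0
    have hIC : IntegrableOn (fun s => φ s / ((t - s : ℝ) : ℂ)) C :=
      integrableOn_kernel_C hφi t hm0
    have h1 := integral_inter_add_diff (μ := volume) (s := Bset t ε) (t := C)
      (Cset_measurable t m) hIB (f := fun s => φ s / ((t - s : ℝ) : ℂ))
    have h2 := integral_inter_add_diff (μ := volume) (s := C) (t := Bset t ε)
      (Bset_measurable t ε) hIC (f := fun s => φ s / ((t - s : ℝ) : ℂ))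
    have hCB : C \ Bset t ε ⊆ {0} := by
      intro s hs
      by_contra hs0
      apply hs.2
      refine mem_Bset_of_far ht hε0 (by linarith) hs0 ?_
      rw [abs_sub_comm]
      exact hs.1
    have h3 : (∫ s in C \ Bset t ε, φ s / ((t - s : ℝ) : ℂ)) = 0 :=
      setIntegral_measure_zero _ (measure_mono_null hCB (by simp))
    have hΔ : (∫ s in Bset t ε, φ s / ((t - s : ℝ) : ℂ)) - (∫ s in C, φ s / ((t - s : ℝ) : ℂ))
        = ∫ s in E, φ s / ((t - s : ℝ) : ℂ) := by
      rw [← h1, ← h2, h3, Set.inter_comm]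
      ring
    rw [hΔ]
    -- integrabilities on E
    have hconstE : IntegrableOn (fun _ : ℝ => ‖φ t‖) E :=
      integrableOn_const hEfin.ne
    have hsubE : IntegrableOn (fun s => ‖φ s - φ t‖) E :=
      (hφi.integrableOn.sub (integrableOn_const hEfin.ne)).norm
    -- chain
    have step1 : ‖∫ s in E, φ s / ((t - s : ℝ) : ℂ)‖ ≤ ∫ s in E, d⁻¹ * ‖φ s‖ := by
      refine (norm_integral_le_integral_norm _).trans ?_
      refine setIntegral_mono_on (hIB.mono_set Set.diff_subset).norm
        ((hφi.norm.const_mul d⁻¹).integrableOn) hEmeas ?_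
      intro s hs
      rw [norm_div, Complex.norm_real, Real.norm_eq_abs, abs_sub_comm, inv_mul_eq_div]
      gcongr
      exact (hEfar s hs).le
    have step2 : (∫ s in E, d⁻¹ * ‖φ s‖) = d⁻¹ * ∫ s in E, ‖φ s‖ := integral_const_mul _ _
    have step3 : (∫ s in E, ‖φ s‖) ≤ (∫ s in E, ‖φ s - φ t‖) + (volume E).toReal * ‖φ t‖ := by
      have hle : (∫ s in E, ‖φ s‖) ≤ ∫ s in E, (‖φ s - φ t‖ + ‖φ t‖) := by
        refine setIntegral_mono_on hφi.norm.integrableOn (hsubE.add hconstE) hEmeas ?_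
        intro s _
        calc ‖φ s‖ = ‖(φ s - φ t) + φ t‖ := by ring_nf
        _ ≤ ‖φ s - φ t‖ + ‖φ t‖ := norm_add_le _ _
      rw [integral_add hsubE hconstE, setIntegral_const, smul_eq_mul] at hle
      exact hle
    have step4 : (∫ s in E, ‖φ s - φ t‖) ≤ 2 * m * avg m := by
      have hsubcb : IntegrableOn (fun s => ‖φ s - φ t‖) (Metric.closedBall t m) :=
        (hφi.integrableOn.sub (integrableOn_const
          measure_closedBall_lt_top.ne)).norm
      have hmono : (∫ s in E, ‖φ s - φ t‖) ≤ ∫ s in Metric.closedBall t m, ‖φ s - φ t‖ :=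
        setIntegral_mono_set hsubcb
          (Filter.Eventually.of_forall fun _ => norm_nonneg _) (hEsub.eventuallyLE)
      have havgeq : (∫ s in Metric.closedBall t m, ‖φ s - φ t‖) = 2 * m * avg m := by
        simp only [havg]
        rw [setAverage_eq, Real.volume_real_closedBall (by positivity),
          smul_eq_mul, ← mul_assoc, mul_inv_cancel₀ (by positivity), one_mul]
      linarith [hmono, havgeq.le]
    have hvolE : (volume E).toReal ≤ 2 * (m - d) := by
      have hsub2 : E ⊆ Set.Icc (t - m) (t - d) ∪ Set.Icc (t + d) (t + m) := by
        intro s hs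
        have h4 := hEfar s hs
        have h5 : |s - t| ≤ m := by
          have := hEsub hs
          rw [Metric.mem_closedBall, Real.dist_eq] at this
          exact this
        rcases le_total s t with hle | hle
        · left
          rw [abs_of_nonpos (by linarith)] at h4 h5
          constructor <;> [linarith; linarith]
        · right
          rw [abs_of_nonneg (by linarith)] at h4 h5
          constructor <;> [linarith; linarith]
      have := (measure_mono (μ := volume) hsub2).trans
        (measure_union_le (μ := volume) _ _)
      rw [Real.volume_Icc, Real.volume_Icc] at this
      have heq : t - d - (t - m) = m - d := by ring
      have heq2 : t + m - (t + d) = m - d := by ring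
      rw [heq, heq2, ← ENNReal.ofReal_add (by linarith) (by linarith)] at this
      calc (volume E).toReal ≤ (ENNReal.ofReal ((m - d) + (m - d))).toReal :=
            ENNReal.toReal_mono ENNReal.ofReal_ne_top this
        _ = 2 * (m - d) := by rw [ENNReal.toReal_ofReal (by linarith)]; ring
    have havgpos : 0 ≤ avg m := by
      simp only [havg]
      rw [setAverage_eq]
      exact smul_nonneg (by positivity) (integral_nonneg fun s => norm_nonneg _)
    -- coefficient inequalities
    have hx : (0:ℝ) ≤ ε * t^2 := by positivity
    have hden1 : (0:ℝ) < 1 - ε * |t| := by linarith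
    have hden2 : (0:ℝ) < 1 + ε * |t| := by linarith
    have hc1 : d⁻¹ * (2 * m) ≤ 6 := by
      rw [inv_mul_le_iff₀ hd0]
      simp only [hm, hd, hmf, hdf]
      calc 2 * (ε * t^2 / (1 - ε * |t|)) = (2 * (ε * t^2)) / (1 - ε * |t|) := by ring
        _ ≤ (6 * (ε * t^2)) / (1 + ε * |t|) := by
            rw [div_le_div_iff₀ hden1 hden2]
            nlinarith
        _ = ε * t^2 / (1 + ε * |t|) * 6 := by ring
    have hc2 : d⁻¹ * (2 * (m - d)) ≤ 8 * ε * |t| := by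
      rw [inv_mul_le_iff₀ hd0]
      simp only [hm, hd, hmf, hdf]
      calc 2 * (ε * t^2 / (1 - ε * |t|) - ε * t^2 / (1 + ε * |t|))
          = (ε * t^2 * (4 * (ε * |t|))) / ((1 - ε * |t|) * (1 + ε * |t|)) := by
            field_simp
            ring
        _ ≤ (ε * t^2 * (8 * (ε * |t|) * (1 - ε * |t|))) / ((1 - ε * |t|) * (1 + ε * |t|)) := by
            apply div_le_div_of_nonneg_right ?_ (by positivity)
            nlinarith [mul_nonneg (mul_nonneg hx (by linarith : (0:ℝ) ≤ 4 * (ε * |t|)))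
              (by linarith : (0:ℝ) ≤ 1 - 2 * (ε * |t|))]
        _ = ε * t^2 / (1 + ε * |t|) * (8 * ε * |t|) := by
            field_simp
    have hfin : ‖∫ s in E, φ s / ((t - s : ℝ) : ℂ)‖ ≤ 6 * avg m + 8 * ε * |t| * ‖φ t‖ := by
      calc ‖∫ s in E, φ s / ((t - s : ℝ) : ℂ)‖ ≤ d⁻¹ * ∫ s in E, ‖φ s‖ := by
            rw [← step2]; exact step1
        _ ≤ d⁻¹ * (2 * m * avg m + 2 * (m - d) * ‖φ t‖) := by
            apply mul_le_mul_of_nonneg_left ?_ (inv_nonneg.2 hd0.le)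
            have h7 : (volume E).toReal * ‖φ t‖ ≤ 2 * (m - d) * ‖φ t‖ :=
              mul_le_mul_of_nonneg_right hvolE (norm_nonneg _)
            linarith
        _ = (d⁻¹ * (2 * m)) * avg m + (d⁻¹ * (2 * (m - d))) * ‖φ t‖ := by ring
        _ ≤ 6 * avg m + 8 * ε * |t| * ‖φ t‖ :=
            add_le_add (mul_le_mul_of_nonneg_right hc1 havgpos)
              (mul_le_mul_of_nonneg_right hc2 (norm_nonneg _))
    exact hfin
  · -- tendsto zero
    have t1 : Tendsto (fun ε => 6 * avg (mf ε)) (𝓝[>] (0:ℝ)) (𝓝 0) := by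
      have := (hleb.comp hm_tendsto).const_mul (6:ℝ)
      simpa using this
    have t2 : Tendsto (fun ε => 8 * ε * |t| * ‖φ t‖) (𝓝[>] (0:ℝ)) (𝓝 0) := by
      have hcont : Continuous (fun ε : ℝ => 8 * ε * |t| * ‖φ t‖) := by fun_prop
      have hc := (hcont.tendsto 0).mono_left (nhdsWithin_le_nhds (s := Set.Ioi (0:ℝ)))
      simpa using hc
    simpa using t1.add t2

/-- If `ψ ∈ L¹(ℝ)` with `∫ ψ = 0` and `φ(s) = s^{-2} ψ(1/s)`, then for a.e. `t ≠ 0`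
the Hilbert transforms satisfy `Hψ(1/t) = -t² · Hφ(t)`. -/
theorem hilbert_transform_inversion_identity
    (ψ : ℝ → ℂ) (hψ : Integrable ψ) (hmean : (∫ x : ℝ, ψ x) = 0)
    (φ : ℝ → ℂ) (hφ : ∀ s : ℝ, s ≠ 0 → φ s = ψ (1/s) / ((s:ℂ) ^ 2)) :
    ∀ᵐ t : ℝ, t ≠ 0 → ∀ u v : ℂ,
      HilbertAt ψ (1/t) u → HilbertAt φ t v → u = -((t:ℂ) ^ 2) * v := by
  have hφi : Integrable φ := phi_integrable ψ φ hψ hφ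
  have hφ0 : (∫ s : ℝ, φ s) = 0 := phi_integral_zero ψ φ hψ hmean hφ
  filter_upwards [ae_lebesgue φ hφi] with t hleb ht u v hu hv
  have hK : Tendsto (fun r => ∫ y in {y : ℝ | r < |t - y|}, φ y / ((t - y : ℝ) : ℂ))
      (𝓝[>] (0:ℝ)) (𝓝 ((π:ℝ) • v)) := by
    have h1 := hv.const_smul (π:ℝ)
    refine h1.congr fun r => ?_
    rw [smul_smul, mul_one_div, div_self Real.pi_ne_zero, one_smul]
  have hG : Tendsto (fun ε => ∫ s in Bset t ε, φ s / ((t - s : ℝ) : ℂ))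
      (𝓝[>] (0:ℝ)) (𝓝 ((π:ℝ) • v)) := by
    have h1 := sliver_bound φ hφi ht hleb
    have h2 := hK.comp (mf_tendsto ht)
    have h3 := h1.add h2
    rw [zero_add] at h3
    refine h3.congr fun ε => ?_
    simp [Function.comp]
  have hJ : Tendsto (fun ε => ∫ s in Bset t ε, φ s) (𝓝[>] (0:ℝ)) (𝓝 0) := by
    simpa [hφ0] using tendsto_Bset_integral φ hφi ht
  have hRHS : Tendsto (fun ε => (1/π : ℝ) •
      ((t:ℂ) * (∫ s in Bset t ε, φ s) - (t:ℂ)^2 * ∫ s in Bset t ε, φ s / ((t - s : ℝ) : ℂ)))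
      (𝓝[>] (0:ℝ)) (𝓝 ((1/π : ℝ) • ((t:ℂ) * 0 - (t:ℂ)^2 * ((π:ℝ) • v)))) :=
    ((tendsto_const_nhds.mul hJ).sub (tendsto_const_nhds.mul hG)).const_smul _
  have hEq : (fun ε : ℝ => (1/π : ℝ) • ∫ y in {y : ℝ | ε < |1/t - y|}, ψ y / ((1/t - y : ℝ) : ℂ))
      =ᶠ[𝓝[>] (0:ℝ)] (fun ε : ℝ => (1/π : ℝ) •
      ((t:ℂ) * (∫ s in Bset t ε, φ s) - (t:ℂ)^2 * ∫ s in Bset t ε, φ s / ((t - s : ℝ) : ℂ))) := by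
    filter_upwards [self_mem_nhdsWithin] with ε hε
    rw [key_identity ψ φ hφi hφ ht hε]
  have huniq := tendsto_nhds_unique (hu.congr' hEq) hRHS
  rw [huniq, mul_zero, zero_sub, smul_neg, mul_smul_comm, smul_smul,
    one_div_mul_cancel Real.pi_ne_zero, one_smul, neg_mul]
end

section
/- With T as above, supp(θ) ⊆ [0,∞) if and only if supp(Tθ) ⊆ (-∞,0]. -/
open MeasureTheory Real
open scoped Nat

namespace TbesselAux
open Nat in
lemma fact_notation_test : (0:ℕ)! = 1 := rfl

noncomputable def Ik (k : ℕ) : ℝ := ∫ s in Set.Ioc (-1:ℝ) 1, s ^ (2*k) * Real.sqrt (1 - s^2)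

lemma contIk (k : ℕ) : Continuous fun s : ℝ => s ^ (2*k) * Real.sqrt (1 - s^2) := by
  exact (continuous_pow _).mul (Real.continuous_sqrt.comp (by continuity))

lemma Ik_pos (k : ℕ) : 0 < Ik k := by
  rw [Ik, setIntegral_pos_iff_support_of_nonneg_ae]
  · have hsub : Set.Ioo (0:ℝ) 1 ⊆ (Function.support fun s : ℝ => s ^ (2*k) * Real.sqrt (1 - s^2)) ∩ Set.Ioc (-1:ℝ) 1 := by
      intro s hs
      have h1 : 0 < s := hs.1
      have h2 : s < 1 := hs.2
      constructor
      · have : 0 < s ^ (2*k) * Real.sqrt (1 - s^2) := by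
          apply mul_pos (pow_pos h1 _)
          apply Real.sqrt_pos.2
          nlinarith
        exact ne_of_gt this
      · exact ⟨by linarith, le_of_lt h2⟩
    have := measure_mono (μ := volume) hsub
    have hpos : (0:ENNReal) < volume (Set.Ioo (0:ℝ) 1) := by
      simp [Real.volume_Ioo]
    exact lt_of_lt_of_le hpos this
  · filter_upwards with s
    apply mul_nonneg _ (Real.sqrt_nonneg _)
    rw [pow_mul]
    positivity
  · exact (contIk k).integrableOn_Ioc

lemma Ik_le_two (k : ℕ) : Ik k ≤ 2 := by
  have h : Ik k ≤ ∫ s in Set.Ioc (-1:ℝ) 1, (1:ℝ) := by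
    apply setIntegral_mono_on (contIk k).integrableOn_Ioc (integrableOn_const (by simp) (by simp)) measurableSet_Ioc
    intro s hs
    have h1 : |s| ≤ 1 := abs_le.2 ⟨le_of_lt hs.1, hs.2⟩
    have hsq : s ^ 2 ≤ 1 := by nlinarith [hs.1, hs.2]
    have h2 : s ^ (2*k) ≤ 1 := by
      rw [pow_mul]; exact pow_le_one₀ (sq_nonneg s) hsq
    have h3 : Real.sqrt (1 - s^2) ≤ 1 := by
      calc Real.sqrt (1 - s^2) ≤ Real.sqrt 1 := Real.sqrt_le_sqrt (by nlinarith)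
        _ = 1 := Real.sqrt_one
    calc s ^ (2*k) * Real.sqrt (1 - s^2) ≤ 1 * 1 := by
          apply mul_le_mul h2 h3 (Real.sqrt_nonneg _) zero_le_one
      _ = 1 := by ring
  have h2 : ∫ s in Set.Ioc (-1:ℝ) 1, (1:ℝ) = 2 := by
    simp [Real.volume_Ioc]
    norm_num
  linarith


noncomputable def bC : ℝ := Real.sqrt π * Real.Gamma (1 + 1/2)

lemma bC_pos : 0 < bC :=
  mul_pos (Real.sqrt_pos.2 Real.pi_pos) (Real.Gamma_pos_of_pos (by norm_num))

noncomputable def bcoef (k : ℕ) : ℝ := (-1)^k * Ik k / ((2*k)! : ℝ) / (2 * bC)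

lemma bcoef_ne (k : ℕ) : bcoef k ≠ 0 := by
  rw [bcoef]
  have h1 := Ik_pos k
  have h2 := bC_pos
  have h3 : (0:ℝ) < ((2*k)! : ℝ) := by positivity
  rcases Nat.even_or_odd k with he | ho
  · rw [he.neg_one_pow]
    positivity
  · rw [ho.neg_one_pow]
    have : (0:ℝ) < Ik k / ((2*k)! : ℝ) / (2 * bC) := by positivity
    intro hc
    rw [neg_one_mul, neg_div, neg_div] at hc
    linarith [neg_eq_zero.mp hc ▸ this]

lemma abs_bcoef_le (k : ℕ) : |bcoef k| ≤ 1 / bC := by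
  have h1 := Ik_pos k
  have h2 := bC_pos
  have h4 := Ik_le_two k
  have h3 : (1:ℝ) ≤ ((2*k)! : ℝ) := by exact_mod_cast Nat.one_le_iff_ne_zero.2 (Nat.factorial_ne_zero _)
  rw [bcoef, abs_div, abs_div, abs_mul, abs_pow, abs_neg, abs_one, one_pow, one_mul,
    abs_of_pos h1, abs_of_pos (by positivity : (0:ℝ) < ((2*k)! : ℝ)),
    abs_of_pos (by positivity : (0:ℝ) < 2 * bC)]
  rw [div_div]
  rw [div_le_div_iff₀ (by positivity) h2]
  have : (1:ℝ) * (2 * bC) ≤ ((2*k)! : ℝ) * (2 * bC) := by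
    apply mul_le_mul_of_nonneg_right h3 (by positivity)
  nlinarith

lemma summable_aux (c : ℝ) (hc : 0 ≤ c) : Summable (fun k : ℕ => c^(2*k) / ((2*k)! : ℝ)) := by
  have h := Real.summable_pow_div_factorial c
  exact h.comp_injective (fun a b hab => by omega)

lemma besselJ_one_series (x : ℝ) : besselJ 1 x = ∑' k : ℕ, bcoef k * x^(2*k+1) := by
  set F : ℕ → ℝ → ℝ := fun k s => ((-1:ℝ)^k * (x*s)^(2*k) / ((2*k)! : ℝ)) * Real.sqrt (1 - s^2) with hFdef
  have hcong : ∀ s : ℝ, Real.cos (x*s) * Real.sqrt (1 - s^2) = ∑' k, F k s := by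
    intro s
    rw [Real.cos_eq_tsum, tsum_mul_right]
  have hintk : ∀ k, Integrable (F k) (volume.restrict (Set.Ioc (-1:ℝ) 1)) := by
    intro k
    apply Continuous.integrableOn_Ioc
    apply Continuous.mul (by continuity) (Real.continuous_sqrt.comp (by continuity))
  have hnorm : ∀ k : ℕ, ∀ s ∈ Set.Ioc (-1:ℝ) 1, ‖F k s‖ ≤ |x|^(2*k) / ((2*k)! : ℝ) := by
    intro k s hs
    have e1 : ‖F k s‖ = (|x*s|^(2*k)/((2*k)! : ℝ)) * Real.sqrt (1-s^2) := by
      rw [Real.norm_eq_abs, abs_mul, abs_of_nonneg (Real.sqrt_nonneg _), abs_div, abs_mul,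
        abs_pow, abs_pow, abs_neg, abs_one, one_pow, one_mul,
        abs_of_nonneg (by positivity : (0:ℝ) ≤ ((2*k)! : ℝ))]
    rw [e1]
    have h1 : |x*s| ≤ |x| := by
      rw [abs_mul]
      have : |s| ≤ 1 := abs_le.2 ⟨le_of_lt hs.1, hs.2⟩
      nlinarith [abs_nonneg x, abs_nonneg s]
    have h2 : |x*s|^(2*k) ≤ |x|^(2*k) := pow_le_pow_left₀ (abs_nonneg _) h1 _
    have h3 : Real.sqrt (1 - s^2) ≤ 1 := by
      calc Real.sqrt (1-s^2) ≤ Real.sqrt 1 := Real.sqrt_le_sqrt (by nlinarith [sq_nonneg s])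
        _ = 1 := Real.sqrt_one
    have hfac : (0:ℝ) < ((2*k)! : ℝ) := by positivity
    calc |x*s|^(2*k)/((2*k)! : ℝ) * Real.sqrt (1-s^2) ≤ |x|^(2*k)/((2*k)! : ℝ) * 1 := by
          apply mul_le_mul ((div_le_div_iff_of_pos_right hfac).2 h2) h3 (Real.sqrt_nonneg _) (by positivity)
      _ = |x|^(2*k)/((2*k)! : ℝ) := by ring
  have hbound : ∀ k : ℕ, ∫ s in Set.Ioc (-1:ℝ) 1, ‖F k s‖ ≤ 2 * (|x|^(2*k) / ((2*k)! : ℝ)) := by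
    intro k
    have h1 : ∫ s in Set.Ioc (-1:ℝ) 1, ‖F k s‖ ≤ ∫ s in Set.Ioc (-1:ℝ) 1, (|x|^(2*k) / ((2*k)! : ℝ)) :=
      setIntegral_mono_on (hintk k).norm (integrableOn_const (by simp) (by simp)) measurableSet_Ioc (hnorm k)
    have h2 : (volume (Set.Ioc (-1:ℝ) 1)).toReal = 2 := by
      rw [Real.volume_Ioc]
      norm_num
    rw [setIntegral_const, measureReal_def, h2, smul_eq_mul] at h1
    exact h1
  have hsum : Summable (fun k : ℕ => ∫ s in Set.Ioc (-1:ℝ) 1, ‖F k s‖) := by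
    apply Summable.of_nonneg_of_le (fun k => integral_nonneg (fun s => norm_nonneg _)) hbound
    exact (summable_aux |x| (abs_nonneg x)).mul_left 2
  have hswap : ∫ s in Set.Ioc (-1:ℝ) 1, Real.cos (x*s) * Real.sqrt (1 - s^2)
      = ∑' k : ℕ, ∫ s in Set.Ioc (-1:ℝ) 1, F k s := by
    rw [integral_congr_ae (Filter.Eventually.of_forall fun s => hcong s)]
    exact (integral_tsum_of_summable_integral_norm hintk hsum).symm
  have hFk : ∀ k : ℕ, ∫ s in Set.Ioc (-1:ℝ) 1, F k s
      = ((-1:ℝ)^k * x^(2*k) / ((2*k)! : ℝ)) * Ik k := by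
    intro k
    rw [Ik, ← integral_const_mul]
    apply setIntegral_congr_fun measurableSet_Ioc
    intro s _
    simp only [hFdef]
    rw [mul_pow]
    ring
  have hint : besselJ 1 x = (x/2)/bC * ∫ s in Set.Ioc (-1:ℝ) 1, Real.cos (x*s) * Real.sqrt (1-s^2) := by
    simp only [besselJ, Real.rpow_one, bC]
    rw [intervalIntegral.integral_of_le (by norm_num : (-1:ℝ) ≤ 1)]
    norm_num [Real.sqrt_eq_rpow]
  rw [hint, hswap, ← tsum_mul_left]
  apply tsum_congr
  intro k
  rw [hFk k]
  simp only [bcoef]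
  ring

lemma tsum_coeff_head_zero (a : ℕ → ℂ) (C B : ℝ) (hB : 0 < B)
    (hbound : ∀ k, ‖a k‖ ≤ C * B ^ k)
    (hzero : ∀ ξ : ℝ, 0 < ξ → ξ < 1/(2*B) → ∑' k, a k * (ξ:ℂ)^k = 0) :
    a 0 = 0 ∧ ∀ ξ : ℝ, 0 < ξ → ξ < 1/(2*B) → ∑' k, a (k+1) * (ξ:ℂ)^k = 0 := by
  have hC : 0 ≤ C := le_trans (norm_nonneg (a 0)) (by simpa using hbound 0)
  have hsummable : ∀ ξ : ℝ, 0 < ξ → ξ < 1/(2*B) → Summable (fun k => a k * (ξ:ℂ)^k) := by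
    intro ξ hξ hξ2
    have hr : 0 ≤ B * ξ := by positivity
    have hr2 : B * ξ < 1 := by
      rw [lt_div_iff₀ (by positivity)] at hξ2
      nlinarith
    apply Summable.of_norm_bounded (g := fun k => C * (B*ξ)^k)
      ((summable_geometric_of_lt_one hr hr2).mul_left C)
    intro k
    have : ‖a k * (ξ:ℂ)^k‖ = ‖a k‖ * ξ^k := by
      rw [norm_mul, norm_pow, Complex.norm_real, Real.norm_eq_abs, abs_of_pos hξ]
    rw [this, mul_pow]
    have := hbound k
    have hp : (0:ℝ) ≤ ξ^k := by positivity
    calc ‖a k‖ * ξ^k ≤ C * B^k * ξ^k := by nlinarith [pow_nonneg (le_of_lt hξ) k]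
      _ = C * (B^k * ξ^k) := by ring
  have htail : ∀ ξ : ℝ, 0 < ξ → ξ < 1/(2*B) → a 0 = - ∑' k, a (k+1) * (ξ:ℂ)^(k+1) := by
    intro ξ hξ hξ2
    have h := hzero ξ hξ hξ2
    rw [Summable.tsum_eq_zero_add (hsummable ξ hξ hξ2)] at h
    simp only [pow_zero, mul_one] at h
    linear_combination h
  have hkey : ∀ ξ : ℝ, 0 < ξ → ξ < 1/(2*B) → ‖a 0‖ ≤ 2*C*B*ξ := by
    intro ξ hξ hξ2
    have hr : 0 ≤ B * ξ := by positivity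
    have hr2 : B * ξ ≤ 1/2 := by
      rw [lt_div_iff₀ (by positivity)] at hξ2
      nlinarith
    have hgeom : HasSum (fun k : ℕ => C * (B*ξ) * (B*ξ)^k) (C * (B*ξ) * (1 - B*ξ)⁻¹) :=
      (hasSum_geometric_of_lt_one hr (by linarith)).mul_left _
    have hnormle : ‖∑' k, a (k+1) * (ξ:ℂ)^(k+1)‖ ≤ C * (B*ξ) * (1 - B*ξ)⁻¹ := by
      apply tsum_of_norm_bounded hgeom
      intro k
      have : ‖a (k+1) * (ξ:ℂ)^(k+1)‖ = ‖a (k+1)‖ * ξ^(k+1) := by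
        rw [norm_mul, norm_pow, Complex.norm_real, Real.norm_eq_abs, abs_of_pos hξ]
      rw [this]
      calc ‖a (k+1)‖ * ξ^(k+1) ≤ (C * B^(k+1)) * ξ^(k+1) := by
            apply mul_le_mul_of_nonneg_right (hbound _) (by positivity)
        _ = C * (B*ξ) * (B*ξ)^k := by rw [mul_pow]; ring
    have hinv : (1 - B*ξ)⁻¹ ≤ 2 := by
      rw [inv_le_comm₀ (by linarith) (by norm_num)]
      linarith
    rw [htail ξ hξ hξ2, norm_neg]
    calc ‖∑' k, a (k+1) * (ξ:ℂ)^(k+1)‖ ≤ C * (B*ξ) * (1 - B*ξ)⁻¹ := hnormle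
      _ ≤ C * (B*ξ) * 2 := by
          apply mul_le_mul_of_nonneg_left hinv (by positivity)
      _ = 2*C*B*ξ := by ring
  have ha0 : a 0 = 0 := by
    have h0 : ‖a 0‖ ≤ 0 := by
      by_contra hcon
      push_neg at hcon
      set ε := ‖a 0‖ with hε
      have hεpos : 0 < ε := hcon
      set ξ := min (ε/(2*(2*C*B+1))) (1/(4*B)) with hξdef
      have hξpos : 0 < ξ := lt_min (by positivity) (by positivity)
      have hξlt : ξ < 1/(2*B) := by
        apply lt_of_le_of_lt (min_le_right _ _)
        rw [div_lt_div_iff₀ (by positivity) (by positivity)]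
        nlinarith
      have hb := hkey ξ hξpos hξlt
      have h1 : ξ ≤ ε/(2*(2*C*B+1)) := min_le_left _ _
      have h2 : 2*C*B*ξ ≤ 2*C*B*(ε/(2*(2*C*B+1))) := by
        apply mul_le_mul_of_nonneg_left h1 (by positivity)
      have h3 : 2*C*B*(ε/(2*(2*C*B+1))) < ε := by
        rw [mul_div_assoc']
        rw [div_lt_iff₀ (by positivity)]
        nlinarith
      linarith
    simpa using norm_le_zero_iff.mp h0
  refine ⟨ha0, ?_⟩
  intro ξ hξ hξ2
  have h := htail ξ hξ hξ2
  rw [ha0] at h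
  have h2 : ∑' k, a (k+1) * (ξ:ℂ)^(k+1) = (ξ:ℂ) * ∑' k, a (k+1) * (ξ:ℂ)^k := by
    rw [← tsum_mul_left]
    apply tsum_congr
    intro k
    ring
  rw [h2] at h
  have hξne : (ξ:ℂ) ≠ 0 := by
    simp only [ne_eq, Complex.ofReal_eq_zero]
    linarith
  have h3 : (ξ:ℂ) * ∑' k, a (k+1) * (ξ:ℂ)^k = 0 := neg_eq_zero.mp h.symm
  rcases mul_eq_zero.mp h3 with hc | hc
  · exact absurd hc hξne
  · exact hc

lemma coeff_zero_of_tsum_zero (a : ℕ → ℂ) (C B : ℝ) (hB : 0 < B)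
    (hbound : ∀ k, ‖a k‖ ≤ C * B ^ k)
    (hzero : ∀ ξ : ℝ, 0 < ξ → ξ < 1/(2*B) → ∑' k, a k * (ξ:ℂ)^k = 0) :
    ∀ k, a k = 0 := by
  intro k
  induction k generalizing a C with
  | zero => exact (tsum_coeff_head_zero a C B hB hbound hzero).1
  | succ n ih =>
      exact ih (fun m => a (m+1)) (C*B)
        (fun m => by
          calc ‖a (m+1)‖ ≤ C * B^(m+1) := hbound _
            _ = C*B * B^m := by ring)
        (tsum_coeff_head_zero a C B hB hbound hzero).2


lemma real_zero_of_moments (v : ℝ → ℝ) (hv : Continuous v) (R : ℝ) (hR : 0 < R)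
    (hvanish : ∀ y : ℝ, y ≤ -R → v y = 0)
    (hmom : ∀ p : Polynomial ℝ, ∫ y in Set.Iio (0:ℝ), v y * p.eval y = 0) :
    ∀ y : ℝ, y < 0 → v y = 0 := by
  have hunion : Set.Iic (-R) ∪ Set.Ioo (-R) (0:ℝ) = Set.Iio 0 := by
    ext y
    simp only [Set.mem_union, Set.mem_Iic, Set.mem_Ioo, Set.mem_Iio]
    constructor
    · rintro (h | ⟨h1, h2⟩)
      · linarith
      · exact h2
    · intro h
      rcases le_or_gt y (-R) with h1 | h1
      · exact Or.inl h1
      · exact Or.inr ⟨h1, h⟩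
  have hintIoo : ∀ w : ℝ → ℝ, Continuous w → IntegrableOn w (Set.Ioo (-R) (0:ℝ)) := by
    intro w hw
    exact (hw.integrableOn_Ioc).mono_set Set.Ioo_subset_Ioc_self
  have hmom' : ∀ p : Polynomial ℝ, ∫ y in Set.Ioo (-R) (0:ℝ), v y * p.eval y = 0 := by
    intro p
    have h0 := hmom p
    rw [← hunion] at h0
    rw [setIntegral_union (Set.disjoint_left.mpr
        (fun y hy hy2 => absurd hy2.1 (not_lt.2 (Set.mem_Iic.mp hy)))) measurableSet_Ioo
      (by
        apply (integrableOn_zero (μ := volume)).congr_fun _ measurableSet_Iic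
        intro y hy
        simp [hvanish y hy])
      (hintIoo (fun y => v y * p.eval y) (hv.mul p.continuous))] at h0
    have hz : ∫ y in Set.Iic (-R), v y * p.eval y = 0 := by
      apply setIntegral_eq_zero_of_forall_eq_zero
      intro y hy
      simp [hvanish y hy]
    rw [hz, zero_add] at h0
    exact h0
  have hsq : ∫ y in Set.Ioo (-R) (0:ℝ), (v y)^2 = 0 := by
    have hKnn : 0 ≤ ∫ y in Set.Ioo (-R) (0:ℝ), |v y| :=
      integral_nonneg (fun y => abs_nonneg _)
    set K := ∫ y in Set.Ioo (-R) (0:ℝ), |v y| with hK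
    have hub : ∀ ε : ℝ, 0 < ε → ∫ y in Set.Ioo (-R) (0:ℝ), (v y)^2 ≤ K * ε := by
      intro ε hε
      obtain ⟨p, hp⟩ := exists_polynomial_near_of_continuousOn (-R) 0 v hv.continuousOn ε hε
      have hsub : ∫ y in Set.Ioo (-R) (0:ℝ), (v y)^2
          = ∫ y in Set.Ioo (-R) (0:ℝ), v y * (v y - p.eval y) := by
        rw [← sub_eq_zero, ← integral_sub (hintIoo (fun y => (v y)^2) (hv.pow 2)) (hintIoo (fun y => v y * (v y - p.eval y)) (hv.mul (hv.sub p.continuous)))]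
        have : ∫ y in Set.Ioo (-R) (0:ℝ), ((v y)^2 - v y * (v y - p.eval y)) =
            ∫ y in Set.Ioo (-R) (0:ℝ), v y * p.eval y := by
          apply setIntegral_congr_fun measurableSet_Ioo
          intro y _
          ring
        rw [this]
        exact hmom' p
      rw [hsub]
      calc ∫ y in Set.Ioo (-R) (0:ℝ), v y * (v y - p.eval y)
          ≤ ∫ y in Set.Ioo (-R) (0:ℝ), |v y| * ε := by
            apply setIntegral_mono_on (hintIoo _ (hv.mul (hv.sub p.continuous)))
              ((hintIoo _ hv.abs).mul_const ε) measurableSet_Ioo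
            intro y hy
            have hy' : y ∈ Set.Icc (-R) 0 := ⟨le_of_lt hy.1, le_of_lt hy.2⟩
            have := hp y hy'
            calc v y * (v y - p.eval y) ≤ |v y * (v y - p.eval y)| := le_abs_self _
              _ = |v y| * |v y - p.eval y| := abs_mul _ _
              _ ≤ |v y| * ε := by
                  apply mul_le_mul_of_nonneg_left _ (abs_nonneg _)
                  rw [abs_sub_comm]
                  exact le_of_lt this
        _ = K * ε := by rw [integral_mul_const]
    have hnn : 0 ≤ ∫ y in Set.Ioo (-R) (0:ℝ), (v y)^2 :=
      integral_nonneg (fun y => sq_nonneg _)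
    by_contra hcon
    have hpos : 0 < ∫ y in Set.Ioo (-R) (0:ℝ), (v y)^2 := lt_of_le_of_ne hnn (Ne.symm hcon)
    set I := ∫ y in Set.Ioo (-R) (0:ℝ), (v y)^2
    have := hub (I / (2*(K+1))) (by positivity)
    have h2 : K * (I / (2*(K+1))) < I := by
      rw [mul_div_assoc']
      rw [div_lt_iff₀ (by positivity)]
      nlinarith
    linarith
  have hIoo : ∀ y ∈ Set.Ioo (-R) (0:ℝ), v y = 0 := by
    intro y0 hy0
    by_contra hcon
    have hpos : 0 < volume (Function.support (fun y => (v y)^2) ∩ Set.Ioo (-R) (0:ℝ)) := by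
      have hopen : IsOpen (Function.support (fun y => (v y)^2) ∩ Set.Ioo (-R) (0:ℝ)) :=
        ((hv.pow 2).isOpen_support).inter isOpen_Ioo
      apply hopen.measure_pos volume
      exact ⟨y0, by simp [Function.mem_support, pow_eq_zero_iff, hcon], hy0⟩
    have := (setIntegral_pos_iff_support_of_nonneg_ae
      (Filter.Eventually.of_forall (fun y => sq_nonneg (v y)))
      (hintIoo _ (hv.pow 2))).mpr hpos
    linarith [hsq, this]
  intro y hy
  rcases le_or_gt y (-R) with h1 | h1
  · exact hvanish y h1
  · exact hIoo y ⟨h1, hy⟩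


lemma theta_zero_of_moments (θ : ℝ → ℂ) (hcont : Continuous θ) (R : ℝ) (hR : 0 < R)
    (hvanish : ∀ y : ℝ, y ≤ -R → θ y = 0)
    (hmom : ∀ k : ℕ, ∫ y in Set.Iio (0:ℝ), θ y * ((|y|^k : ℝ) : ℂ) = 0) :
    ∀ y : ℝ, y < 0 → θ y = 0 := by
  have hunion : Set.Iic (-R) ∪ Set.Ioo (-R) (0:ℝ) = Set.Iio 0 := by
    ext y
    simp only [Set.mem_union, Set.mem_Iic, Set.mem_Ioo, Set.mem_Iio]
    constructor
    · rintro (h | ⟨h1, h2⟩)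
      · linarith
      · exact h2
    · intro h
      rcases le_or_gt y (-R) with h1 | h1
      · exact Or.inl h1
      · exact Or.inr ⟨h1, h⟩
  have hint : ∀ g : ℝ → ℂ, Continuous g → IntegrableOn (fun y => θ y * g y) (Set.Iio (0:ℝ)) := by
    intro g hg
    rw [← hunion]
    apply IntegrableOn.union
    · apply (integrableOn_zero (μ := volume)).congr_fun _ measurableSet_Iic
      intro y hy
      simp [hvanish y hy]
    · exact ((hcont.mul hg).integrableOn_Ioc).mono_set Set.Ioo_subset_Ioc_self
  have hmonC : ∀ k : ℕ, ∫ y in Set.Iio (0:ℝ), θ y * (y:ℂ)^k = 0 := by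
    intro k
    have he : ∀ y ∈ Set.Iio (0:ℝ), θ y * (y:ℂ)^k = ((-1:ℂ)^k) * (θ y * ((|y|^k : ℝ):ℂ)) := by
      intro y hy
      have habs : |y| = -y := abs_of_neg hy
      have h2 : ((-1:ℂ))^k * ((-1):ℂ)^k = 1 := by
        rw [← pow_add]
        exact Even.neg_one_pow ⟨k, rfl⟩
      rw [habs]
      rw [show (((-y)^k : ℝ) : ℂ) = (-(y:ℂ))^k from by push_cast; ring]
      rw [neg_pow (y:ℂ) k]
      rw [show ((-1:ℂ)^k * (θ y * ((-1:ℂ)^k * (y:ℂ)^k)))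
        = ((-1:ℂ)^k*(-1:ℂ)^k) * (θ y * (y:ℂ)^k) from by ring, h2, one_mul]
    rw [setIntegral_congr_fun measurableSet_Iio he, integral_const_mul, hmom k, mul_zero]
  have hC : ∀ p : Polynomial ℝ, ∫ y in Set.Iio (0:ℝ), θ y * ((p.eval y : ℝ):ℂ) = 0 := by
    intro p
    induction p using Polynomial.induction_on' with
    | add q r hq hr =>
        have e : ∀ y ∈ Set.Iio (0:ℝ), θ y * (((q+r).eval y : ℝ):ℂ)
            = θ y * ((q.eval y:ℝ):ℂ) + θ y * ((r.eval y:ℝ):ℂ) := by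
          intro y _
          rw [Polynomial.eval_add]
          push_cast
          ring
        rw [setIntegral_congr_fun measurableSet_Iio e,
          integral_add (hint (fun y => ((q.eval y:ℝ):ℂ)) (Complex.continuous_ofReal.comp q.continuous))
            (hint (fun y => ((r.eval y:ℝ):ℂ)) (Complex.continuous_ofReal.comp r.continuous)), hq, hr, add_zero]
    | monomial n c =>
        have e : ∀ y ∈ Set.Iio (0:ℝ), θ y * (((Polynomial.monomial n c).eval y : ℝ):ℂ)
            = (c:ℂ) * (θ y * (y:ℂ)^n) := by
          intro y _
          rw [Polynomial.eval_monomial]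
          push_cast
          ring
        rw [setIntegral_congr_fun measurableSet_Iio e, integral_const_mul, hmonC, mul_zero]
  have hre : ∀ y : ℝ, y < 0 → (θ y).re = 0 := by
    apply real_zero_of_moments (fun y => (θ y).re) (Complex.continuous_re.comp hcont) R hR
    · intro y hy
      simp [hvanish y hy]
    · intro p
      have h1 : ∫ y in Set.Iio (0:ℝ), (θ y).re * p.eval y
          = (∫ y in Set.Iio (0:ℝ), θ y * ((p.eval y:ℝ):ℂ)).re := by
        rw [← RCLike.re_eq_complex_re,
          ← integral_re (hint (fun y => ((p.eval y:ℝ):ℂ)) (Complex.continuous_ofReal.comp p.continuous))]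
        apply setIntegral_congr_fun measurableSet_Iio
        intro y _
        simp [RCLike.re_eq_complex_re, Complex.mul_re]
      rw [h1, hC p, Complex.zero_re]
  have him : ∀ y : ℝ, y < 0 → (θ y).im = 0 := by
    apply real_zero_of_moments (fun y => (θ y).im) (Complex.continuous_im.comp hcont) R hR
    · intro y hy
      simp [hvanish y hy]
    · intro p
      have h1 : ∫ y in Set.Iio (0:ℝ), (θ y).im * p.eval y
          = (∫ y in Set.Iio (0:ℝ), θ y * ((p.eval y:ℝ):ℂ)).im := by
        rw [← RCLike.im_eq_complex_im,
          ← integral_im (hint (fun y => ((p.eval y:ℝ):ℂ)) (Complex.continuous_ofReal.comp p.continuous))]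
        apply setIntegral_congr_fun measurableSet_Iio
        intro y _
        simp [RCLike.im_eq_complex_im, Complex.mul_im]
      rw [h1, hC p, Complex.zero_im]
  intro y hy
  exact Complex.ext (hre y hy) (him y hy)


end TbesselAux


/-- The operator `T` defined for `θ ∈ C_c^∞(ℝ)` with `θ(0) = 0` by
`Tθ(ξ) = -π √|ξ| ∫_{ξy < 0} (θ(y)/√|y|) J₁(2π√|ξy|) dy`. -/
noncomputable def Tbessel (θ : ℝ → ℂ) (ξ : ℝ) : ℂ :=
  (-π * Real.sqrt |ξ| : ℝ) •
    ∫ y in {y : ℝ | ξ * y < 0},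
      θ y / ((Real.sqrt |y| : ℝ) : ℂ) * ((besselJ 1 (2 * π * Real.sqrt |ξ * y|) : ℝ) : ℂ)

open TbesselAux

/-- `supp θ ⊆ [0,∞)` if and only if `supp (Tθ) ⊆ (-∞,0]`. -/
theorem Tbessel_support_flip
    (θ : ℝ → ℂ) (hsmooth : ContDiff ℝ (⊤ : ℕ∞) θ) (hsupp : HasCompactSupport θ)
    (h0 : θ 0 = 0) :
    tsupport θ ⊆ Set.Ici (0:ℝ) ↔ tsupport (Tbessel θ) ⊆ Set.Iic (0:ℝ) := by

  have hcont : Continuous θ := hsmooth.continuous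
  have hsetIio : ∀ ξ : ℝ, 0 < ξ → {y : ℝ | ξ * y < 0} = Set.Iio 0 := by
    intro ξ hξ
    ext y
    simp only [Set.mem_setOf_eq, Set.mem_Iio]
    constructor
    · intro h
      by_contra hcon
      push_neg at hcon
      nlinarith
    · intro h
      exact mul_neg_of_pos_of_neg hξ h
  constructor
  · intro hIci
    apply closure_minimal _ isClosed_Iic
    intro ξ hξ
    by_contra hcon
    simp only [Set.mem_Iic, not_le] at hcon
    apply hξ
    show Tbessel θ ξ = 0
    rw [Tbessel, hsetIio ξ hcon]
    have hzero : ∫ y in Set.Iio (0:ℝ),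
        θ y / ((Real.sqrt |y| : ℝ) : ℂ) * ((besselJ 1 (2 * π * Real.sqrt |ξ * y|) : ℝ) : ℂ) = 0 := by
      apply setIntegral_eq_zero_of_forall_eq_zero
      intro y hy
      have hθy : θ y = 0 := by
        apply image_eq_zero_of_notMem_tsupport
        intro hmem
        have := hIci hmem
        simp only [Set.mem_Ici] at this
        simp only [Set.mem_Iio] at hy
        linarith
      rw [hθy, zero_div, zero_mul]
    rw [hzero, smul_zero]
  · intro hIic
    -- choose R
    obtain ⟨r, hr⟩ := hsupp.isBounded.subset_closedBall 0
    set R : ℝ := max r 1 with hRdef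
    have hR : 0 < R := lt_of_lt_of_le one_pos (le_max_right _ _)
    have hsuppR : tsupport θ ⊆ Set.Icc (-R) R := by
      intro y hy
      have := hr hy
      rw [Metric.closedBall, Set.mem_setOf_eq, Real.dist_eq, sub_zero] at this
      have : |y| ≤ R := le_trans this (le_max_left _ _)
      exact ⟨neg_le_of_abs_le this, le_of_abs_le this⟩
    have hvanishR : ∀ y : ℝ, θ y ≠ 0 → |y| ≤ R := by
      intro y hy
      have hmem : y ∈ tsupport θ := subset_closure hy
      have := hsuppR hmem
      exact abs_le.mpr ⟨this.1, this.2⟩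
    set L : ℝ := ∫ y in Set.Iio (0:ℝ), ‖θ y‖ with hLdef
    have hintc : ∀ g : ℝ → ℝ, Continuous g → Integrable (fun y => θ y * ((g y : ℝ):ℂ)) := by
      intro g hg
      apply Continuous.integrable_of_hasCompactSupport
        (hcont.mul (Complex.continuous_ofReal.comp hg))
      exact hsupp.mul_right
    have hintabs : ∀ g : ℝ → ℝ, Continuous g → Integrable (fun y => ‖θ y‖ * g y) := by
      intro g hg
      apply Continuous.integrable_of_hasCompactSupport (hcont.norm.mul hg)
      exact hsupp.norm.mul_right
    have hL : 0 ≤ L := integral_nonneg (fun y => norm_nonneg _)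
    have hmombound : ∀ k : ℕ, ∫ y in Set.Iio (0:ℝ), ‖θ y‖ * |y|^k ≤ L * R^k := by
      intro k
      have h1 : ∫ y in Set.Iio (0:ℝ), ‖θ y‖ * |y|^k ≤ ∫ y in Set.Iio (0:ℝ), ‖θ y‖ * R^k := by
        apply setIntegral_mono ((hintabs _ (continuous_abs.pow k)).integrableOn)
          ((hintabs _ continuous_const).integrableOn)
        intro y
        rcases eq_or_ne (θ y) 0 with h | h
        · simp [h]
        · have := hvanishR y h
          apply mul_le_mul_of_nonneg_left _ (norm_nonneg _)
          exact pow_le_pow_left₀ (abs_nonneg _) this k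
      rw [integral_mul_const] at h1
      exact h1
    -- moments vanish
    have hmom : ∀ k : ℕ, ∫ y in Set.Iio (0:ℝ), θ y * ((|y|^k : ℝ) : ℂ) = 0 := by
      set B : ℝ := (2*π)^2 * R with hBdef
      have hB : 0 < B := by positivity
      set M : ℕ → ℂ := fun k => ∫ y in Set.Iio (0:ℝ), θ y * ((|y|^k : ℝ) : ℂ) with hMdef
      set a : ℕ → ℂ := fun k => ((bcoef k * (2*π)^(2*k+1) : ℝ) : ℂ) * M k with hadef
      have hMbound : ∀ k, ‖M k‖ ≤ L * R^k := by
        intro k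
        calc ‖M k‖ ≤ ∫ y in Set.Iio (0:ℝ), ‖θ y * ((|y|^k : ℝ) : ℂ)‖ :=
              norm_integral_le_integral_norm _
          _ = ∫ y in Set.Iio (0:ℝ), ‖θ y‖ * |y|^k := by
              apply setIntegral_congr_fun measurableSet_Iio
              intro y _
              simp only [norm_mul, Complex.norm_real, Real.norm_eq_abs, abs_pow, abs_abs]
          _ ≤ L * R^k := hmombound k
      have hbound : ∀ k, ‖a k‖ ≤ (2*π*L/bC) * B^k := by
        intro k
        have h1 : ‖a k‖ = |bcoef k * (2*π)^(2*k+1)| * ‖M k‖ := by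
          show ‖((bcoef k * (2*π)^(2*k+1) : ℝ) : ℂ) * M k‖ = _
          rw [norm_mul, Complex.norm_real, Real.norm_eq_abs]
        rw [h1]
        have h2 : |bcoef k * (2*π)^(2*k+1)| ≤ (1/bC) * (2*π)^(2*k+1) := by
          rw [abs_mul, abs_of_pos (by positivity : (0:ℝ) < (2*π)^(2*k+1))]
          exact mul_le_mul_of_nonneg_right (abs_bcoef_le k) (by positivity)
        calc |bcoef k * (2*π)^(2*k+1)| * ‖M k‖
            ≤ ((1/bC) * (2*π)^(2*k+1)) * (L * R^k) := by
              apply mul_le_mul h2 (hMbound k) (norm_nonneg _)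
                (mul_nonneg (le_of_lt (div_pos one_pos bC_pos)) (by positivity))
          _ = (2*π*L/bC) * B^k := by
              rw [hBdef, mul_pow, pow_succ, pow_mul]
              field_simp
              ring
      have hzero : ∀ ξ : ℝ, 0 < ξ → ξ < 1/(2*B) → ∑' k, a k * (ξ:ℂ)^k = 0 := by
        intro ξ hξ hξ2
        have hT0 : Tbessel θ ξ = 0 := by
          apply image_eq_zero_of_notMem_tsupport
          intro hmem
          have := hIic hmem
          simp only [Set.mem_Iic] at this
          linarith
        rw [Tbessel, hsetIio ξ hξ] at hT0
        have hsne : (-π * Real.sqrt |ξ| : ℝ) ≠ 0 := by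
          have : (0:ℝ) < Real.sqrt |ξ| := Real.sqrt_pos.2 (abs_pos.2 (ne_of_gt hξ))
          have hπ := Real.pi_pos
          intro hc
          nlinarith
        have hI : ∫ y in Set.Iio (0:ℝ),
            θ y / ((Real.sqrt |y| : ℝ) : ℂ) * ((besselJ 1 (2 * π * Real.sqrt |ξ * y|) : ℝ) : ℂ) = 0 := by
          rcases smul_eq_zero.mp hT0 with h | h
          · exact absurd h hsne
          · exact h
        -- pointwise expansion
        set G : ℕ → ℝ → ℂ := fun k y =>
          θ y * ((bcoef k * (2*π)^(2*k+1) * Real.sqrt ξ * ξ^k * |y|^k : ℝ) : ℂ) with hGdef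
        have hpt : ∀ y ∈ Set.Iio (0:ℝ),
            θ y / ((Real.sqrt |y| : ℝ) : ℂ) * ((besselJ 1 (2 * π * Real.sqrt |ξ * y|) : ℝ) : ℂ)
              = ∑' k, G k y := by
          intro y hy
          simp only [Set.mem_Iio] at hy
          have hay : 0 < |y| := abs_pos.2 (ne_of_lt hy)
          have hsy : 0 < Real.sqrt |y| := Real.sqrt_pos.2 hay
          have habs : |ξ * y| = ξ * |y| := by
            rw [abs_mul, abs_of_pos hξ]
          have hsqrtmul : Real.sqrt (ξ * |y|) = Real.sqrt ξ * Real.sqrt |y| :=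
            Real.sqrt_mul (le_of_lt hξ) _
          rw [habs, hsqrtmul, besselJ_one_series, Complex.ofReal_tsum, ← tsum_mul_left]
          apply tsum_congr
          intro k
          rw [hGdef]
          simp only
          have hx : (2 * π * (Real.sqrt ξ * Real.sqrt |y|))^(2*k+1)
              = (2*π)^(2*k+1) * (ξ^k * Real.sqrt ξ) * (|y|^k * Real.sqrt |y|) := by
            rw [mul_pow, mul_pow (Real.sqrt ξ) (Real.sqrt |y|)]
            have e1 : (Real.sqrt ξ)^(2*k+1) = ξ^k * Real.sqrt ξ := by
              rw [pow_succ, pow_mul, Real.sq_sqrt (le_of_lt hξ)]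
            have e2 : (Real.sqrt |y|)^(2*k+1) = |y|^k * Real.sqrt |y| := by
              rw [pow_succ, pow_mul, Real.sq_sqrt (abs_nonneg y)]
            rw [e1, e2]
            ring
          rw [hx]
          have hsyne : ((Real.sqrt |y| : ℝ) : ℂ) ≠ 0 := by
            simp only [ne_eq, Complex.ofReal_eq_zero]
            exact ne_of_gt hsy
          push_cast
          field_simp
        rw [setIntegral_congr_fun measurableSet_Iio hpt] at hI
        -- swap integral and sum
        have hGint : ∀ k, Integrable (G k) (volume.restrict (Set.Iio (0:ℝ))) := by
          intro k
          exact (hintc (fun y => bcoef k * (2*π)^(2*k+1) * Real.sqrt ξ * ξ^k * |y|^k)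
            (continuous_const.mul (continuous_abs.pow k))).integrableOn
        have hGbound : ∀ k : ℕ, ∫ y in Set.Iio (0:ℝ), ‖G k y‖
            ≤ (2*π*Real.sqrt ξ*L/bC) * (B*ξ)^k := by
          intro k
          have hcabs : |bcoef k * (2*π)^(2*k+1) * Real.sqrt ξ * ξ^k|
              = |bcoef k| * ((2*π)^(2*k+1) * (Real.sqrt ξ * ξ^k)) := by
            rw [abs_mul, abs_mul, abs_mul,
              abs_of_pos (by positivity : (0:ℝ) < (2*π)^(2*k+1)),
              abs_of_nonneg (Real.sqrt_nonneg ξ), abs_of_pos (pow_pos hξ k)]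
            ring
          have hc2 : |bcoef k * (2*π)^(2*k+1) * Real.sqrt ξ * ξ^k|
              ≤ (1/bC) * ((2*π)^(2*k+1) * (Real.sqrt ξ * ξ^k)) := by
            rw [hcabs]
            exact mul_le_mul_of_nonneg_right (abs_bcoef_le k) (by positivity)
          have e1 : ∀ y ∈ Set.Iio (0:ℝ), ‖G k y‖
              = ‖θ y‖ * |y|^k * |bcoef k * (2*π)^(2*k+1) * Real.sqrt ξ * ξ^k| := by
            intro y _
            show ‖θ y * ((bcoef k * (2*π)^(2*k+1) * Real.sqrt ξ * ξ^k * |y|^k : ℝ):ℂ)‖ = _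
            rw [norm_mul, Complex.norm_real, Real.norm_eq_abs,
              abs_mul (bcoef k * (2*π)^(2*k+1) * Real.sqrt ξ * ξ^k) (|y|^k),
              abs_pow, abs_abs]
            ring
          calc ∫ y in Set.Iio (0:ℝ), ‖G k y‖
              = (∫ y in Set.Iio (0:ℝ), ‖θ y‖ * |y|^k)
                  * |bcoef k * (2*π)^(2*k+1) * Real.sqrt ξ * ξ^k| := by
                rw [← integral_mul_const]
                exact setIntegral_congr_fun measurableSet_Iio e1
            _ ≤ (L * R^k) * ((1/bC) * ((2*π)^(2*k+1) * (Real.sqrt ξ * ξ^k))) := by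
                apply mul_le_mul (hmombound k) hc2 (abs_nonneg _) (mul_nonneg hL (by positivity))
            _ = (2*π*Real.sqrt ξ*L/bC) * (B*ξ)^k := by
                rw [hBdef, mul_pow, mul_pow, pow_succ, pow_mul]
                field_simp
                ring
        have hq1 : B * ξ < 1 := by
          rw [lt_div_iff₀ (by positivity)] at hξ2
          nlinarith
        have hsumG : Summable (fun k : ℕ => ∫ y in Set.Iio (0:ℝ), ‖G k y‖) := by
          apply Summable.of_nonneg_of_le
            (fun k => integral_nonneg (fun y => norm_nonneg _)) hGbound
          exact (summable_geometric_of_lt_one (by positivity) hq1).mul_left _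
        have hswap2 : ∑' k, ∫ y in Set.Iio (0:ℝ), G k y = 0 :=
          (integral_tsum_of_summable_integral_norm hGint hsumG).trans hI
        have hGk : ∀ k : ℕ, ∫ y in Set.Iio (0:ℝ), G k y
            = ((bcoef k * (2*π)^(2*k+1) * Real.sqrt ξ * ξ^k : ℝ):ℂ) * M k := by
          intro k
          show _ = _ * ∫ y in Set.Iio (0:ℝ), θ y * ((|y|^k : ℝ) : ℂ)
          rw [← integral_const_mul]
          apply setIntegral_congr_fun measurableSet_Iio
          intro y _
          show θ y * ((bcoef k * (2*π)^(2*k+1) * Real.sqrt ξ * ξ^k * |y|^k : ℝ):ℂ) = _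
          push_cast
          ring
        have h5 : ∑' k, ∫ y in Set.Iio (0:ℝ), G k y
            = ∑' k, ((Real.sqrt ξ : ℝ):ℂ) * (a k * (ξ:ℂ)^k) := by
          apply tsum_congr
          intro k
          rw [hGk k]
          have ha : a k = ((bcoef k * (2*π)^(2*k+1) : ℝ):ℂ) * M k := rfl
          rw [ha]
          push_cast
          ring
        rw [h5, tsum_mul_left] at hswap2
        rcases mul_eq_zero.mp hswap2 with h | h
        · exact absurd (Complex.ofReal_eq_zero.mp h)
            (ne_of_gt (Real.sqrt_pos.2 hξ))
        · exact h
      have hak := coeff_zero_of_tsum_zero a (2*π*L/bC) B hB hbound hzero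
      intro k
      have hk := hak k
      have ha : a k = ((bcoef k * (2*π)^(2*k+1) : ℝ):ℂ) * M k := rfl
      rw [ha] at hk
      have hne : ((bcoef k * (2*π)^(2*k+1) : ℝ):ℂ) ≠ 0 := by
        simp only [ne_eq, Complex.ofReal_eq_zero]
        intro hcz
        rcases mul_eq_zero.mp hcz with h | h
        · exact bcoef_ne k h
        · have : (0:ℝ) < (2*π)^(2*k+1) := by positivity
          linarith
      exact (mul_eq_zero.mp hk).resolve_left hne
    -- conclude
    have hzero' : ∀ y : ℝ, y < 0 → θ y = 0 := by
      apply theta_zero_of_moments θ hcont (R+1) (by linarith)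
      · intro y hy
        apply image_eq_zero_of_notMem_tsupport
        intro hmem
        have := (hsuppR hmem).1
        linarith
      · exact hmom
    apply closure_minimal _ isClosed_Ici
    intro y hy
    simp only [Function.mem_support] at hy
    simp only [Set.mem_Ici]
    by_contra hcon
    push_neg at hcon
    exact hy (hzero' y hcon)
end
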